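/- arXiv:2001.09611 — 9 statements merged into one kernel-verified Lean document; each statement's English description precedes it below -/
import Mathlib

section
/- For every n-dimensional nonnegative vector α, positive vector μ, and n×n substochastic nonnegative matrix P, there exists a nonnegative vector λ satisfying λ = α + (λ ∧ μ)P, where ∧ denotes entrywise minimum. -/
/-!
The map `x ↦ α + (x ∧ μ) P` is monotone because `P ≥ 0`, sends `0` to `α ≥ 0`, and never exceeds
`c = α + μ P` since `x ∧ μ ≤ μ`. It therefore maps the order interval `[0, c]` into itself, which
is a complete lattice, and Tarski's fixed point theorem yields a solution `λ ∈ [0, c]`.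
-/

open Set Function Matrix

theorem Monotone.exists_isFixedPt_mem_Icc {α : Type*} [ConditionallyCompleteLattice α]
    {f : α → α} (hf : Monotone f) {a b : α} (hab : a ≤ b) (ha : a ≤ f a) (hb : f b ≤ b) :
    ∃ x ∈ Icc a b, IsFixedPt f x := by
  have : Fact (a ≤ b) := ⟨hab⟩
  let g : Icc a b →o Icc a b :=
    ⟨fun x => ⟨f x, ha.trans (hf x.2.1), (hf x.2.2).trans hb⟩, fun _ _ hxy => hf hxy⟩
  exact ⟨g.lfp, g.lfp.2, congrArg Subtype.val g.isFixedPt_lfp⟩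

theorem Matrix.vecMul_le_vecMul_of_nonneg {m n R : Type*} [Fintype m] [Semiring R]
    [PartialOrder R] [IsOrderedRing R] {P : Matrix m n R} (hP : ∀ i j, 0 ≤ P i j)
    {v w : m → R} (hvw : v ≤ w) : v ᵥ* P ≤ w ᵥ* P := fun j =>
  Finset.sum_le_sum fun i _ => mul_le_mul_of_nonneg_right (hvw i) (hP i j)

section TrafficMap

variable {n : ℕ} (α μ : Fin n → ℝ) (P : Matrix (Fin n) (Fin n) ℝ)

def trafficMap (x : Fin n → ℝ) : Fin n → ℝ := α + (x ⊓ μ) ᵥ* P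

variable {α μ P}

theorem trafficMap_monotone (hP : ∀ i j, 0 ≤ P i j) : Monotone (trafficMap α μ P) :=
  fun _ _ hxy => add_le_add_right (vecMul_le_vecMul_of_nonneg hP (inf_le_inf_right μ hxy)) α

theorem trafficMap_zero (hμ : 0 ≤ μ) : trafficMap α μ P 0 = α := by
  simp [trafficMap, inf_eq_left.mpr hμ]

theorem trafficMap_le (hP : ∀ i j, 0 ≤ P i j) (x : Fin n → ℝ) :
    trafficMap α μ P x ≤ α + μ ᵥ* P :=
  add_le_add_right (vecMul_le_vecMul_of_nonneg hP inf_le_right) α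

end TrafficMap

theorem traffic_equation_has_nonneg_solution_general (n : ℕ)
    (α μ : Fin n → ℝ) (P : Matrix (Fin n) (Fin n) ℝ)
    (hα : ∀ i, 0 ≤ α i) (hμ : ∀ i, 0 < μ i)
    (hP : ∀ i j, 0 ≤ P i j) :
    ∃ lam : Fin n → ℝ, (∀ i, 0 ≤ lam i) ∧
      ∀ i, lam i = α i + ∑ j, min (lam j) (μ j) * P j i := by
  have h0 : 0 ≤ trafficMap α μ P 0 := (trafficMap_zero fun i => (hμ i).le).symm ▸ hα
  obtain ⟨lam, ⟨hlam, -⟩, hfix⟩ := (trafficMap_monotone hP).exists_isFixedPt_mem_Icc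
    (h0.trans (trafficMap_le hP 0)) h0 (trafficMap_le hP _)
  exact ⟨lam, hlam, fun i => (congrFun hfix i).symm⟩

/-- existence of a nonnegative solution to the Goodman–Massey
traffic equation λ = α + (λ ∧ μ) P for any substochastic nonnegative P. -/
theorem traffic_equation_has_nonneg_solution (n : ℕ)
    (α μ : Fin n → ℝ) (P : Matrix (Fin n) (Fin n) ℝ)
    (hα : ∀ i, 0 ≤ α i) (hμ : ∀ i, 0 < μ i)
    (hP : ∀ i j, 0 ≤ P i j) (hPsub : ∀ i, ∑ j, P i j ≤ 1) :
    ∃ lam : Fin n → ℝ, (∀ i, 0 ≤ lam i) ∧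
      ∀ i, lam i = α i + ∑ j, min (lam j) (μ j) * P j i :=
  traffic_equation_has_nonneg_solution_general n α μ P hα hμ hP
end

section
/- Suppose P is an n×n irreducible substochastic matrix, α ≥ 0, μ > 0, and the network (α, μ, P) is non-isolated (i.e., either some α_i > 0 or P is strictly substochastic in some row). Then every solution λ of λ = α + (λ ∧ μ)P is nonnegative. -/
/-- for an irreducible substochastic `P` and a non-isolated
network `(α, μ, P)`, every solution of the traffic equation is nonnegative. -/
theorem irreducible_NI_solution_nonneg (n : ℕ)
    (α μ : Fin n → ℝ) (P : Matrix (Fin n) (Fin n) ℝ)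
    (hα : ∀ i, 0 ≤ α i) (hμ : ∀ i, 0 < μ i)
    (hP : ∀ i j, 0 ≤ P i j) (hPsub : ∀ i, ∑ j, P i j ≤ 1)
    (hirr : ∀ i j : Fin n, i = j ∨
      ((∃ k ≥ 1, 0 < (P ^ k) i j) ∧ (∃ l ≥ 1, 0 < (P ^ l) j i)))
    (hNI : (∃ i, 0 < α i) ∨ (∃ i, ∑ j, P i j < 1))
    (lam : Fin n → ℝ)
    (heq : ∀ i, lam i = α i + ∑ j, min (lam j) (μ j) * P j i) :
    ∀ i, 0 ≤ lam i := by
  by_contra hcon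
  push_neg at hcon
  obtain ⟨i0, hi0⟩ := hcon
  set ν : Fin n → ℝ := fun j => min (lam j) (μ j) with hνdef
  set S : Finset (Fin n) := Finset.univ.filter (fun i => lam i < 0) with hSdef
  have hmemS : ∀ i, i ∈ S ↔ lam i < 0 := by
    intro i; simp [hSdef]
  have hi0S : i0 ∈ S := (hmemS i0).2 hi0
  set s : Fin n → ℝ := fun j => ∑ i ∈ S, P j i with hsdef
  have hsle : ∀ j, s j ≤ ∑ i, P j i := by
    intro j
    exact Finset.sum_le_sum_of_subset_of_nonneg (Finset.subset_univ S)
      (fun i _ _ => hP j i)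
  have hsnonneg : ∀ j, 0 ≤ s j := fun j => Finset.sum_nonneg fun i _ => hP j i
  have hνS : ∀ j ∈ S, ν j = lam j := by
    intro j hj
    have := (hmemS j).1 hj
    simp [hνdef, min_eq_left, le_of_lt (lt_trans this (hμ j))]
  have hνSc : ∀ j, j ∉ S → 0 ≤ ν j := by
    intro j hj
    have : 0 ≤ lam j := le_of_not_gt (fun h => hj ((hmemS j).2 h))
    exact le_min this (le_of_lt (hμ j))
  -- key identity
  have key : ∑ i ∈ S, lam i = ∑ i ∈ S, α i + ∑ j, ν j * s j := by
    calc ∑ i ∈ S, lam i = ∑ i ∈ S, (α i + ∑ j, ν j * P j i) := by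
          apply Finset.sum_congr rfl; intro i _; exact heq i
      _ = ∑ i ∈ S, α i + ∑ i ∈ S, ∑ j, ν j * P j i := Finset.sum_add_distrib
      _ = ∑ i ∈ S, α i + ∑ j, ∑ i ∈ S, ν j * P j i := by rw [Finset.sum_comm]
      _ = ∑ i ∈ S, α i + ∑ j, ν j * s j := by
          congr 1; apply Finset.sum_congr rfl; intro j _
          rw [hsdef, Finset.mul_sum]
  have hsplit : ∑ j, ν j * s j = ∑ j ∈ S, ν j * s j + ∑ j ∈ Sᶜ, ν j * s j :=
    (Finset.sum_add_sum_compl S _).symm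
  -- the three nonnegative pieces summing to zero
  have hA : 0 ≤ ∑ i ∈ S, α i := Finset.sum_nonneg fun i _ => hα i
  have hB : 0 ≤ ∑ j ∈ S, lam j * (s j - 1) := by
    apply Finset.sum_nonneg
    intro j hj
    have h1 : lam j < 0 := (hmemS j).1 hj
    have h2 : s j - 1 ≤ 0 := by
      have := le_trans (hsle j) (hPsub j); linarith
    exact mul_nonneg_of_nonpos_of_nonpos (le_of_lt h1) h2
  have hC : 0 ≤ ∑ j ∈ Sᶜ, ν j * s j := by
    apply Finset.sum_nonneg
    intro j hj
    exact mul_nonneg (hνSc j (Finset.mem_compl.1 hj)) (hsnonneg j)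
  have hiden : ∑ i ∈ S, α i + ∑ j ∈ S, lam j * (s j - 1) + ∑ j ∈ Sᶜ, ν j * s j = 0 := by
    have h1 : ∑ j ∈ S, ν j * s j = ∑ j ∈ S, lam j * s j :=
      Finset.sum_congr rfl fun j hj => by rw [hνS j hj]
    have h2 : ∑ j ∈ S, lam j * (s j - 1) = ∑ j ∈ S, lam j * s j - ∑ j ∈ S, lam j := by
      rw [← Finset.sum_sub_distrib]
      apply Finset.sum_congr rfl; intro j _; ring
    rw [hsplit, h1] at key
    rw [h2]; linarith
  have hAz : ∑ i ∈ S, α i = 0 := by linarith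
  have hBz : ∑ j ∈ S, lam j * (s j - 1) = 0 := by linarith
  have hCz : ∑ j ∈ Sᶜ, ν j * s j = 0 := by linarith
  -- pointwise consequences
  have hαz : ∀ i ∈ S, α i = 0 := by
    intro i hi
    exact (Finset.sum_eq_zero_iff_of_nonneg fun i _ => hα i).1 hAz i hi
  have hs1 : ∀ j ∈ S, s j = 1 := by
    intro j hj
    have := (Finset.sum_eq_zero_iff_of_nonneg (fun j hj => by
      have h1 : lam j < 0 := (hmemS j).1 hj
      have h2 : s j - 1 ≤ 0 := by
        have := le_trans (hsle j) (hPsub j); linarith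
      exact mul_nonneg_of_nonpos_of_nonpos (le_of_lt h1) h2)).1 hBz j hj
    have hlj : lam j ≠ 0 := ne_of_lt ((hmemS j).1 hj)
    have : s j - 1 = 0 := by
      rcases mul_eq_zero.1 this with h | h
      · exact absurd h hlj
      · exact h
    linarith
  -- P j i = 0 for j ∈ S, i ∉ S
  have hclosed : ∀ j ∈ S, ∀ i, i ∉ S → P j i = 0 := by
    intro j hj i hi
    have hsum : ∑ i ∈ Sᶜ, P j i ≤ 0 := by
      have := Finset.sum_add_sum_compl S (fun i => P j i)
      have h1 := hs1 j hj
      have h2 := hPsub j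
      rw [hsdef] at h1
      linarith [this]
    have hz : ∑ i ∈ Sᶜ, P j i = 0 :=
      le_antisymm hsum (Finset.sum_nonneg fun i _ => hP j i)
    exact (Finset.sum_eq_zero_iff_of_nonneg fun i _ => hP j i).1 hz i
      (Finset.mem_compl.2 hi)
  -- powers stay in S
  have hpow : ∀ k, 1 ≤ k → ∀ j ∈ S, ∀ i, i ∉ S → (P ^ k) j i = 0 := by
    intro k hk
    induction k, hk using Nat.le_induction with
    | base => intro j hj i hi; rw [pow_one]; exact hclosed j hj i hi
    | succ k hk ih =>
      intro j hj i hi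
      rw [pow_succ']
      show ∑ m, P j m * (P ^ k) m i = 0
      apply Finset.sum_eq_zero
      intro m _
      by_cases hm : m ∈ S
      · rw [ih m hm i hi, mul_zero]
      · rw [hclosed j hj m hm, zero_mul]
  -- derive contradiction from non-isolation
  have hnotin : ∀ i, i ∈ S := by
    intro i
    by_contra hi
    rcases hirr i0 i with h | ⟨⟨k, hk1, hkpos⟩, _⟩
    · exact hi (h ▸ hi0S)
    · rw [hpow k hk1 i0 hi0S i hi] at hkpos; exact lt_irrefl 0 hkpos
  rcases hNI with ⟨i, hi⟩ | ⟨i, hi⟩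
  · have := hαz i (hnotin i); linarith
  · have h1 := hs1 i (hnotin i)
    have := hsle i
    linarith
end

section
/- Suppose P is an n×n irreducible strictly substochastic matrix (irreducible, substochastic, and at least one row sum < 1), α = 0, and μ > 0. Then the only nonnegative solution of λ = (λ ∧ μ)P is λ = 0. -/
/-!
Write `m = λ ∧ μ`, so that `λ = m P` with `0 ≤ m ≤ λ`. Comparing total masses,
`∑ λ = ∑_j m_j (∑_i P_ji) ≤ ∑ m ≤ ∑ λ`, so every inequality is an equality and `m` vanishes on
a row of `P` with sum `< 1`; since `μ > 0`, so does `λ`. The zero set of `λ` is closed under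
taking predecessors along positive entries of `P`, hence along positive entries of its powers,
and irreducibility makes every index such a predecessor.
-/

open Matrix

namespace Matrix

variable {ι R : Type*} [Fintype ι] [CommRing R] [LinearOrder R] [IsStrictOrderedRing R]
  {P : Matrix ι ι R} {m v : ι → R}

theorem mul_rowSum_eq_of_vecMul_eq (hv : v = m ᵥ* P) (hm : ∀ j, 0 ≤ m j) (hmv : ∀ j, m j ≤ v j)
    (hPsub : ∀ j, ∑ i, P j i ≤ 1) (j : ι) :
    m j * ∑ i, P j i = v j := by
  have hle : ∀ j ∈ Finset.univ, m j * ∑ i, P j i ≤ v j := fun j _ =>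
    (mul_le_of_le_one_right (hm j) (hPsub j)).trans (hmv j)
  have htotal : ∑ j, m j * ∑ i, P j i = ∑ j, v j := by
    simp_rw [Finset.mul_sum]
    rw [Finset.sum_comm, hv]
    rfl
  exact (Finset.sum_eq_sum_iff_of_le hle).mp htotal j (Finset.mem_univ j)

theorem eq_zero_of_vecMul_eq_of_rowSum_lt_one (hv : v = m ᵥ* P) (hm : ∀ j, 0 ≤ m j)
    (hmv : ∀ j, m j ≤ v j) (hPsub : ∀ j, ∑ i, P j i ≤ 1) {j : ι}
    (hj : ∑ i, P j i < 1) : m j = 0 := by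
  have h := mul_rowSum_eq_of_vecMul_eq hv hm hmv hPsub j
  nlinarith [hm j, hmv j]

theorem eq_zero_of_vecMul_apply_eq_zero (hm : ∀ j, 0 ≤ m j) (hP : ∀ i j, 0 ≤ P i j) {j l : ι}
    (hl : (m ᵥ* P) l = 0) (hjl : 0 < P j l) : m j = 0 := by
  have hterms := (Finset.sum_eq_zero_iff_of_nonneg fun s _ => mul_nonneg (hm s) (hP s l)).mp hl
  exact (mul_eq_zero.mp (hterms j (Finset.mem_univ j))).resolve_right hjl.ne'

theorem of_pow_apply_pos_of_forall_apply_pos [DecidableEq ι] (hP : ∀ i j, 0 ≤ P i j)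
    {S : ι → Prop} (hS : ∀ j l, 0 < P j l → S l → S j) :
    ∀ (k : ℕ) {j i : ι}, 0 < (P ^ k) j i → S i → S j
  | 0, j, i, h, hi => by
    obtain rfl : j = i := by
      by_contra hji
      simp [one_apply_ne hji] at h
    exact hi
  | k + 1, j, i, h, hi => by
    rw [pow_succ', mul_apply] at h
    obtain ⟨l, -, hl⟩ := (Finset.sum_pos_iff_of_nonneg fun l _ =>
      mul_nonneg (hP j l) (pow_apply_nonneg hP k l i)).mp h
    have hjl : 0 < P j l := pos_of_mul_pos_left hl (pow_apply_nonneg hP k l i)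
    have hli : 0 < (P ^ k) l i := pos_of_mul_pos_right hl (hP j l)
    exact hS j l hjl (of_pow_apply_pos_of_forall_apply_pos hP hS k hli hi)

end Matrix

/-- for an irreducible strictly substochastic matrix `P` and
`α = 0`, the only nonnegative solution of `λ = (λ ∧ μ) P` is `λ = 0`. -/
theorem irreducible_strictly_substochastic_zero_solution (n : ℕ)
    (μ : Fin n → ℝ) (P : Matrix (Fin n) (Fin n) ℝ)
    (hμ : ∀ i, 0 < μ i)
    (hP : ∀ i j, 0 ≤ P i j) (hPsub : ∀ i, ∑ j, P i j ≤ 1)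
    (hstrict : ∃ i, ∑ j, P i j < 1)
    (hirr : ∀ i j : Fin n, i = j ∨
      ((∃ k ≥ 1, 0 < (P ^ k) i j) ∧ (∃ l ≥ 1, 0 < (P ^ l) j i)))
    (lam : Fin n → ℝ) (hlam : ∀ i, 0 ≤ lam i)
    (heq : ∀ i, lam i = ∑ j, min (lam j) (μ j) * P j i) :
    lam = 0 := by
  set m : Fin n → ℝ := fun j => min (lam j) (μ j)
  have hvec : lam = m ᵥ* P := funext heq
  have hm : ∀ j, 0 ≤ m j := fun j => le_min (hlam j) (hμ j).le
  have hmlam : ∀ j, m j ≤ lam j := fun j => min_le_left _ _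
  have hzero : ∀ j, m j = 0 → lam j = 0 := fun j h =>
    (min_eq_iff.mp h).elim (·.1) fun h' => absurd h'.1 (hμ j).ne'
  obtain ⟨i₀, hi₀⟩ := hstrict
  have hlam₀ : lam i₀ = 0 :=
    hzero i₀ (eq_zero_of_vecMul_eq_of_rowSum_lt_one hvec hm hmlam hPsub hi₀)
  have hclosed : ∀ j l, 0 < P j l → lam l = 0 → lam j = 0 := fun j l hjl hl =>
    hzero j (eq_zero_of_vecMul_apply_eq_zero hm hP (hvec ▸ hl) hjl)
  ext i
  rcases hirr i i₀ with rfl | ⟨⟨k, -, hk⟩, -⟩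
  · exact hlam₀
  · exact of_pow_apply_pos_of_forall_apply_pos hP hclosed k hk hlam₀
end

section
/- Suppose the network (α, μ, P) is non-isolated. If x = α + (x ∧ μ)P and y = α + ε + (y ∧ μ)P for some nonnegative vector ε, and x, y are nonnegative, then y ≥ x entrywise (the traffic equation solution is monotone in the input rate). -/
/-!
Let `C = {i | y i < x i}` and suppose it is nonempty. Subtracting the two traffic equations and
summing over `C` shows that `x ≤ μ` on `C` and that `C` is closed with all row sums `1`, so `C`
contains a closed communicating class `K` that cannot be drained. Summing the traffic equation
for `x` over `K`, where `x ≤ μ`, shows that neither exogenous input nor routed flow from outside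
reaches `K`, so `K` cannot be filled either, contradicting non-isolation.
-/

open scoped Classical

/-- `i` and `j` communicate under the nonnegative matrix `P`. -/
def Communicates {n : ℕ} (P : Matrix (Fin n) (Fin n) ℝ) (i j : Fin n) : Prop :=
  i = j ∨ ((∃ k ≥ 1, 0 < (P ^ k) i j) ∧ (∃ l ≥ 1, 0 < (P ^ l) j i))

/-- `C` is a communicating class of `P`. -/
def IsCommClass {n : ℕ} (P : Matrix (Fin n) (Fin n) ℝ) (C : Set (Fin n)) : Prop :=
  ∃ i, C = {j | Communicates P i j}

/-- The class `C` can be filled: exogenous input reaches it directly or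
through routing. -/
def CanBeFilled {n : ℕ} (α : Fin n → ℝ) (P : Matrix (Fin n) (Fin n) ℝ)
    (C : Set (Fin n)) : Prop :=
  (∃ i ∈ C, 0 < α i) ∨ (∃ j, 0 < α j ∧ ∃ l ∈ C, ∃ k ≥ 1, 0 < (P ^ k) j l)

/-- The class `C` can be drained: externally (a row sum in `C` is `< 1`) or
internally (positive routing out of `C`). -/
def CanBeDrained {n : ℕ} (P : Matrix (Fin n) (Fin n) ℝ) (C : Set (Fin n)) : Prop :=
  (∃ i ∈ C, ∑ j, P i j < 1) ∨ (∃ i ∈ C, ∃ j ∉ C, 0 < P i j)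

/-- The network `(α, μ, P)` is non-isolated (NI): every communicating class of
`P` can be filled or drained. -/
def NI {n : ℕ} (α : Fin n → ℝ) (P : Matrix (Fin n) (Fin n) ℝ) : Prop :=
  ∀ C, IsCommClass P C → CanBeFilled α P C ∨ CanBeDrained P C

section Reachability

variable {n : ℕ} {P : Matrix (Fin n) (Fin n) ℝ}

def Reaches (P : Matrix (Fin n) (Fin n) ℝ) (i j : Fin n) : Prop :=
  ∃ k, 0 < (P ^ k) i j

def IsClosedUnder (P : Matrix (Fin n) (Fin n) ℝ) (T : Set (Fin n)) : Prop :=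
  ∀ j ∈ T, ∀ l, 0 < P j l → l ∈ T

lemma Reaches.refl (i : Fin n) : Reaches P i i := ⟨0, by simp⟩

lemma Reaches.of_pos {i j : Fin n} (h : 0 < P i j) : Reaches P i j := ⟨1, by simpa⟩

lemma Reaches.trans (hP : ∀ i j, 0 ≤ P i j) {i j l : Fin n}
    (hij : Reaches P i j) (hjl : Reaches P j l) : Reaches P i l := by
  obtain ⟨a, ha⟩ := hij
  obtain ⟨b, hb⟩ := hjl
  refine ⟨a + b, ?_⟩
  rw [pow_add, Matrix.mul_apply]
  exact (mul_pos ha hb).trans_le <| Finset.single_le_sum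
    (fun m _ => mul_nonneg (Matrix.pow_apply_nonneg hP a i m) (Matrix.pow_apply_nonneg hP b m l))
    (Finset.mem_univ j)

lemma reaches_iff_eq_or_exists_pow_pos {i j : Fin n} :
    Reaches P i j ↔ i = j ∨ ∃ k ≥ 1, 0 < (P ^ k) i j := by
  constructor
  · rintro ⟨_ | k, hk⟩
    · by_contra! h
      simp [h.1] at hk
    · exact .inr ⟨k + 1, by omega, hk⟩
  · rintro (rfl | ⟨k, -, hk⟩)
    exacts [.refl i, ⟨k, hk⟩]

lemma communicates_iff_reaches {i j : Fin n} :
    Communicates P i j ↔ Reaches P i j ∧ Reaches P j i := by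
  simp only [Communicates, reaches_iff_eq_or_exists_pow_pos, eq_comm (a := j)]
  tauto

lemma IsClosedUnder.mem_of_reaches (hP : ∀ i j, 0 ≤ P i j) {T : Set (Fin n)}
    (hT : IsClosedUnder P T) {i j : Fin n} (hi : i ∈ T) (hij : Reaches P i j) : j ∈ T := by
  obtain ⟨k, hk⟩ := hij
  induction k generalizing j with
  | zero =>
    obtain rfl : i = j := by by_contra h; simp [h] at hk
    exact hi
  | succ k ih =>
    rw [pow_succ, Matrix.mul_apply] at hk
    obtain ⟨m, -, hm⟩ :=
      Finset.exists_lt_of_sum_lt (s := Finset.univ) (f := fun _ => (0 : ℝ)) (by simpa using hk)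
    exact hT m (ih (pos_of_mul_pos_left hm (hP m j))) j
      (pos_of_mul_pos_right hm (Matrix.pow_apply_nonneg hP k i m))

/-- The class of a state whose set of reachable states is smallest. -/
lemma exists_isCommClass_subset (hP : ∀ i j, 0 ≤ P i j) {C : Finset (Fin n)}
    (hC : IsClosedUnder P C) (hne : C.Nonempty) :
    ∃ K : Finset (Fin n), IsCommClass P K ∧ K ⊆ C ∧ IsClosedUnder P K := by
  let R : Fin n → Finset (Fin n) := fun i => Finset.univ.filter (Reaches P i)
  have hR_mono : ∀ {i j}, Reaches P i j → R j ⊆ R i := fun hij l hl => by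
    simp only [R, Finset.mem_filter, Finset.mem_univ, true_and] at hl ⊢
    exact hij.trans hP hl
  obtain ⟨i, hiC, hmin⟩ := Finset.exists_min_image C (fun j => (R j).card) hne
  refine ⟨Finset.univ.filter (Communicates P i), ⟨i, by ext; simp⟩, ?_, ?_⟩
  · intro j hj
    simp only [Finset.mem_filter, Finset.mem_univ, true_and, communicates_iff_reaches] at hj
    exact hC.mem_of_reaches hP hiC hj.1
  · intro j hj l hjl
    simp only [Finset.coe_filter, Finset.mem_univ, true_and, Set.mem_ofPred_eq,
      communicates_iff_reaches] at hj ⊢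
    have hil : Reaches P i l := hj.1.trans hP (.of_pos hjl)
    have hRl : R l = R i :=
      Finset.eq_of_subset_of_card_le (hR_mono hil) (hmin l (hC.mem_of_reaches hP hiC hil))
    have hli : i ∈ R l := hRl ▸ by simpa [R] using Reaches.refl i
    exact ⟨hil, by simpa [R] using hli⟩

lemma not_canBeDrained {K : Set (Fin n)} (hrow : ∀ i ∈ K, 1 ≤ ∑ j, P i j)
    (hK : IsClosedUnder P K) : ¬CanBeDrained P K := by
  rintro (⟨i, hi, hlt⟩ | ⟨i, hi, j, hj, hij⟩)
  exacts [(hrow i hi).not_gt hlt, hj (hK i hi j hij)]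

lemma isClosedUnder_of_sum_eq_one (hP : ∀ i j, 0 ≤ P i j) (hPsub : ∀ i, ∑ j, P i j ≤ 1)
    {C : Finset (Fin n)} (hC : ∀ j ∈ C, ∑ i ∈ C, P j i = 1) : IsClosedUnder P C := by
  intro j hj l hjl
  by_contra hl
  have : ∑ i ∈ insert l C, P j i ≤ ∑ i, P j i := Finset.sum_le_univ_sum_of_nonneg (hP j)
  rw [Finset.sum_insert hl, hC j hj] at this
  linarith [hPsub j]

end Reachability

lemma min_sub_min_le_sub {x y : ℝ} (μ : ℝ) (h : y ≤ x) : min x μ - min y μ ≤ x - y := by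
  rcases le_total x μ with hx | hx <;> rcases le_total y μ with hy | hy <;>
    simp only [min_eq_left, min_eq_right, hx, hy] <;> linarith

lemma le_and_eq_one_of_min_sub_min_mul_eq {x y μ s : ℝ} (hyx : y < x) (hs0 : 0 ≤ s) (hs1 : s ≤ 1)
    (h : (min x μ - min y μ) * s = x - y) : x ≤ μ ∧ s = 1 := by
  rcases le_total x μ with hx | hx <;> rcases le_total y μ with hy | hy <;>
    simp only [min_eq_left, min_eq_right, hx, hy] at h <;> constructor <;> nlinarith

section Traffic

variable {n : ℕ} {α μ ε x y : Fin n → ℝ} {P : Matrix (Fin n) (Fin n) ℝ}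

/-- The traffic equation `x = α + (x ∧ μ) P`. -/
def TrafficEq (α μ : Fin n → ℝ) (P : Matrix (Fin n) (Fin n) ℝ) (x : Fin n → ℝ) : Prop :=
  ∀ i, x i = α i + ∑ j, min (x j) (μ j) * P j i

namespace TrafficEq

lemma input_le (hxeq : TrafficEq α μ P x) (hμ : ∀ i, 0 ≤ μ i) (hP : ∀ i j, 0 ≤ P i j)
    (hx : ∀ i, 0 ≤ x i) (i : Fin n) : α i ≤ x i := by
  have : 0 ≤ ∑ j, min (x j) (μ j) * P j i :=
    Finset.sum_nonneg fun j _ => mul_nonneg (le_min (hx j) (hμ j)) (hP j i)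
  linarith [hxeq i]

lemma inflow_le (hxeq : TrafficEq α μ P x) (hα : ∀ i, 0 ≤ α i) (hμ : ∀ i, 0 ≤ μ i)
    (hP : ∀ i j, 0 ≤ P i j) (hx : ∀ i, 0 ≤ x i) (j i : Fin n) :
    min (x j) (μ j) * P j i ≤ x i := by
  have : min (x j) (μ j) * P j i ≤ ∑ j, min (x j) (μ j) * P j i :=
    Finset.single_le_sum (fun j _ => mul_nonneg (le_min (hx j) (hμ j)) (hP j i))
      (Finset.mem_univ j)
  linarith [hxeq i, hα i]

lemma sum_eq_sum_add_sum_mul (hxeq : TrafficEq α μ P x) (S : Finset (Fin n)) :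
    ∑ i ∈ S, x i = ∑ i ∈ S, α i + ∑ j, min (x j) (μ j) * ∑ i ∈ S, P j i := by
  rw [Finset.sum_congr rfl fun i _ => hxeq i, Finset.sum_add_distrib, Finset.sum_comm]
  simp_rw [Finset.mul_sum]

/-- Since `x ≤ μ` on the closed set `K`, the flow that stays in `K` already accounts for all of
`x` on `K`, so nothing else can enter `K`. -/
lemma input_eq_zero_and_inflow_eq_zero (hxeq : TrafficEq α μ P x) (hα : ∀ i, 0 ≤ α i)
    (hμ : ∀ i, 0 ≤ μ i) (hP : ∀ i j, 0 ≤ P i j) (hx : ∀ i, 0 ≤ x i) {K : Finset (Fin n)}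
    (hK : IsClosedUnder P K) (hrow : ∀ i ∈ K, 1 ≤ ∑ j, P i j) (hle : ∀ i ∈ K, x i ≤ μ i) :
    (∀ i ∈ K, α i = 0) ∧ ∀ j ∉ K, ∀ i ∈ K, min (x j) (μ j) * P j i = 0 := by
  set s : Fin n → ℝ := fun j => ∑ i ∈ K, P j i
  have hm : ∀ j, 0 ≤ min (x j) (μ j) := fun j => le_min (hx j) (hμ j)
  have hs : ∀ j ∈ K, 1 ≤ s j := fun j hj => (hrow j hj).trans_eq <| .symm <|
    Finset.sum_subset (Finset.subset_univ K) fun l _ hl =>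
      le_antisymm (not_lt.1 fun hjl => hl (hK j hj l hjl)) (hP j l)
  have hstay : ∑ j ∈ K, x j ≤ ∑ j ∈ K, min (x j) (μ j) * s j := Finset.sum_le_sum fun j hj => by
    rw [min_eq_left (hle j hj)]
    exact le_mul_of_one_le_right (hx j) (hs j hj)
  have hbalance := hxeq.sum_eq_sum_add_sum_mul K
  rw [← Finset.sum_add_sum_compl K] at hbalance
  have hA := Finset.sum_nonneg fun i (_ : i ∈ K) => hα i
  have hB := Finset.sum_nonneg fun j (_ : j ∈ Kᶜ) =>
    mul_nonneg (hm j) (Finset.sum_nonneg fun i (_ : i ∈ K) => hP j i)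
  refine ⟨(Finset.sum_eq_zero_iff_of_nonneg fun i _ => hα i).1 (by linarith),
    fun j hj i hi => le_antisymm ?_ (mul_nonneg (hm j) (hP j i))⟩
  have hjs : min (x j) (μ j) * s j = 0 :=
    (Finset.sum_eq_zero_iff_of_nonneg fun j _ =>
      mul_nonneg (hm j) (Finset.sum_nonneg fun i _ => hP j i)).1 (by linarith) j
      (Finset.mem_compl.2 hj)
  exact hjs ▸ mul_le_mul_of_nonneg_left
    (Finset.single_le_sum (fun i _ => hP j i) hi) (hm j)

lemma exists_lt_of_canBeFilled (hxeq : TrafficEq α μ P x) (hα : ∀ i, 0 ≤ α i)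
    (hμ : ∀ i, 0 < μ i) (hP : ∀ i j, 0 ≤ P i j) (hx : ∀ i, 0 ≤ x i) {K : Finset (Fin n)}
    (hK : IsClosedUnder P K) (hrow : ∀ i ∈ K, 1 ≤ ∑ j, P i j) (hfill : CanBeFilled α P K) :
    ∃ i ∈ K, μ i < x i := by
  by_contra! hle
  have hμ' : ∀ i, 0 ≤ μ i := fun i => (hμ i).le
  obtain ⟨hα0, hinflow0⟩ :=
    hxeq.input_eq_zero_and_inflow_eq_zero hα hμ' hP hx hK hrow hle
  set T : Set (Fin n) := {m | 0 < x m ∧ m ∉ K}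
  -- Positive mass outside `K` stays outside `K`, since no flow enters `K`.
  have hT : IsClosedUnder P T := by
    rintro j ⟨hxj, hjK⟩ l hjl
    have hflow : 0 < min (x j) (μ j) * P j l := mul_pos (lt_min hxj (hμ j)) hjl
    exact ⟨hflow.trans_le (hxeq.inflow_le hα hμ' hP hx j l),
      fun hlK => hflow.ne' (hinflow0 j hjK l hlK)⟩
  rcases hfill with ⟨i, hiK, hαi⟩ | ⟨j, hαj, l, hlK, k, -, hk⟩
  · exact hαi.ne' (hα0 i hiK)
  · have hjT : j ∈ T :=
      ⟨hαj.trans_le (hxeq.input_le hμ' hP hx j), fun hjK => hαj.ne' (hα0 j hjK)⟩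
    exact (hT.mem_of_reaches hP hjT ⟨k, hk⟩).2 hlK

/-- Summed over `C = {y < x}`, the difference of the two traffic equations reads
`∑_C (x - y) + ∑_C ε ≤ ∑_C (x ∧ μ - y ∧ μ) P(·, C)`, while termwise the right side is at most
`x - y`; so every inequality is tight. -/
lemma le_and_sum_eq_one_of_lt (hP : ∀ i j, 0 ≤ P i j) (hPsub : ∀ i, ∑ j, P i j ≤ 1)
    (hε : ∀ i, 0 ≤ ε i) (hxeq : TrafficEq α μ P x) (hyeq : TrafficEq (α + ε) μ P y)
    {j : Fin n} (hj : y j < x j) : x j ≤ μ j ∧ ∑ i with y i < x i, P j i = 1 := by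
  set C := Finset.univ.filter fun i => y i < x i
  set Δ : Fin n → ℝ := fun j => min (x j) (μ j) - min (y j) (μ j)
  set s : Fin n → ℝ := fun j => ∑ i ∈ C, P j i
  have hs0 : ∀ j, 0 ≤ s j := fun j => Finset.sum_nonneg fun i _ => hP j i
  have hs1 : ∀ j, s j ≤ 1 := fun j => (Finset.sum_le_univ_sum_of_nonneg (hP j)).trans (hPsub j)
  have hbalance : ∑ i ∈ C, (x i - y i) + ∑ i ∈ C, ε i =
      ∑ j ∈ C, Δ j * s j + ∑ j ∈ Cᶜ, Δ j * s j := by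
    have hx := hxeq.sum_eq_sum_add_sum_mul C
    have hy := hyeq.sum_eq_sum_add_sum_mul C
    simp only [Pi.add_apply, Finset.sum_add_distrib] at hy
    rw [Finset.sum_add_sum_compl, Finset.sum_sub_distrib]
    simp only [Δ, sub_mul, Finset.sum_sub_distrib]
    linarith
  have hout : ∑ j ∈ Cᶜ, Δ j * s j ≤ 0 := Finset.sum_nonpos fun j hj =>
    mul_nonpos_of_nonpos_of_nonneg
      (sub_nonpos.2 (min_le_min_right _ (not_lt.1 (by simpa [C] using hj)))) (hs0 j)
  have hin : ∀ j ∈ C, Δ j * s j ≤ x j - y j := fun j hj => by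
    have hyx := (Finset.mem_filter.1 hj).2
    calc Δ j * s j ≤ Δ j :=
          mul_le_of_le_one_right (sub_nonneg.2 (min_le_min_right _ hyx.le)) (hs1 j)
      _ ≤ x j - y j := min_sub_min_le_sub _ hyx.le
  have htight := (Finset.sum_eq_sum_iff_of_le hin).1 <| le_antisymm (Finset.sum_le_sum hin) <| by
    linarith [Finset.sum_nonneg fun i (_ : i ∈ C) => hε i]
  exact le_and_eq_one_of_min_sub_min_mul_eq hj (hs0 j) (hs1 j) (htight j (by simpa [C]))

end TrafficEq

end Traffic

theorem traffic_solution_monotone_in_input_general (n : ℕ)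
    (α μ ε x y : Fin n → ℝ) (P : Matrix (Fin n) (Fin n) ℝ)
    (hα : ∀ i, 0 ≤ α i) (hμ : ∀ i, 0 < μ i)
    (hP : ∀ i j, 0 ≤ P i j) (hPsub : ∀ i, ∑ j, P i j ≤ 1)
    (hNI : NI α P)
    (hε : ∀ i, 0 ≤ ε i)
    (hx : ∀ i, 0 ≤ x i)
    (hxeq : ∀ i, x i = α i + ∑ j, min (x j) (μ j) * P j i)
    (hyeq : ∀ i, y i = α i + ε i + ∑ j, min (y j) (μ j) * P j i) :
    ∀ i, x i ≤ y i := by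
  by_contra! ⟨i₀, hi₀⟩
  set C := Finset.univ.filter fun i => y i < x i
  have hC : ∀ j ∈ C, x j ≤ μ j ∧ ∑ i ∈ C, P j i = 1 := fun j hj =>
    TrafficEq.le_and_sum_eq_one_of_lt hP hPsub hε hxeq hyeq (Finset.mem_filter.1 hj).2
  obtain ⟨K, hKclass, hKC, hK⟩ := exists_isCommClass_subset hP
    (isClosedUnder_of_sum_eq_one hP hPsub fun j hj => (hC j hj).2) ⟨i₀, by simpa [C]⟩
  have hrow : ∀ j ∈ K, 1 ≤ ∑ i, P j i := fun j hj =>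
    (hC j (hKC hj)).2.symm.le.trans (Finset.sum_le_univ_sum_of_nonneg (hP j))
  rcases hNI K hKclass with hfill | hdrain
  · obtain ⟨i, hiK, hi⟩ := TrafficEq.exists_lt_of_canBeFilled hxeq hα hμ hP hx hK hrow hfill
    exact (hC i (hKC hiK)).1.not_gt hi
  · exact not_canBeDrained hrow hK hdrain

/-- monotonicity of the traffic equation in the input rate. -/
theorem traffic_solution_monotone_in_input (n : ℕ)
    (α μ ε x y : Fin n → ℝ) (P : Matrix (Fin n) (Fin n) ℝ)
    (hα : ∀ i, 0 ≤ α i) (hμ : ∀ i, 0 < μ i)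
    (hP : ∀ i j, 0 ≤ P i j) (hPsub : ∀ i, ∑ j, P i j ≤ 1)
    (hNI : NI α P)
    (hε : ∀ i, 0 ≤ ε i)
    (hx : ∀ i, 0 ≤ x i) (hy : ∀ i, 0 ≤ y i)
    (hxeq : ∀ i, x i = α i + ∑ j, min (x j) (μ j) * P j i)
    (hyeq : ∀ i, y i = α i + ε i + ∑ j, min (y j) (μ j) * P j i) :
    ∀ i, x i ≤ y i :=
  traffic_solution_monotone_in_input_general n α μ ε x y P hα hμ hP hPsub hNI hε hx hxeq hyeq
end

section
/- Suppose the network (α, μ, P) is non-isolated. Then the traffic equation λ = α + (λ ∧ μ)P has at most one solution. -/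
open scoped Classical

namespace TEaux
variable {n : ℕ}

def Reach (P : Matrix (Fin n) (Fin n) ℝ) (i j : Fin n) : Prop := ∃ k, 0 < (P ^ k) i j

lemma pow_entry_nonneg {P : Matrix (Fin n) (Fin n) ℝ} (hP : ∀ i j, 0 ≤ P i j) :
    ∀ (k : ℕ) (i j : Fin n), 0 ≤ (P ^ k) i j := by
  intro k
  induction k with
  | zero => intro i j; simp [Matrix.one_apply]; split <;> norm_num
  | succ k ih =>
    intro i j
    rw [pow_succ, Matrix.mul_apply]
    exact Finset.sum_nonneg fun m _ => mul_nonneg (ih i m) (hP m j)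

lemma pow_zero_eq {P : Matrix (Fin n) (Fin n) ℝ} {i j : Fin n} (h : 0 < (P ^ 0) i j) :
    i = j := by
  by_contra hne
  rw [pow_zero, Matrix.one_apply_ne hne] at h
  exact lt_irrefl 0 h

lemma mul_apply_pos_decomp {A B : Matrix (Fin n) (Fin n) ℝ}
    (hA : ∀ i j, 0 ≤ A i j) (hB : ∀ i j, 0 ≤ B i j) {i j : Fin n}
    (h : 0 < (A * B) i j) : ∃ m, 0 < A i m ∧ 0 < B m j := by
  by_contra hc
  push_neg at hc
  have : (A * B) i j ≤ 0 := by
    rw [Matrix.mul_apply]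
    apply Finset.sum_nonpos
    intro m _
    rcases lt_or_eq_of_le (hA i m) with h1 | h1
    · have := hc m h1
      have hb0 : B m j = 0 := le_antisymm this (hB m j)
      simp [hb0]
    · simp [← h1]
  linarith

lemma sum_term_pos {f : Fin n → ℝ} (hf : ∀ m, 0 ≤ f m) {m : Fin n} (h : 0 < f m) :
    0 < ∑ j, f j :=
  lt_of_lt_of_le h (Finset.single_le_sum (fun m _ => hf m) (Finset.mem_univ m))

lemma pow_pos_step {P : Matrix (Fin n) (Fin n) ℝ} (hP : ∀ i j, 0 ≤ P i j)
    {k : ℕ} {i m j : Fin n} (h1 : 0 < (P ^ k) i m) (h2 : 0 < P m j) :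
    0 < (P ^ (k + 1)) i j := by
  rw [pow_succ, Matrix.mul_apply]
  exact sum_term_pos (fun l => mul_nonneg (pow_entry_nonneg hP k i l) (hP l j)) (mul_pos h1 h2)

lemma reach_refl (P : Matrix (Fin n) (Fin n) ℝ) (i : Fin n) : Reach P i i :=
  ⟨0, by rw [pow_zero, Matrix.one_apply_eq]; norm_num⟩

lemma reach_trans {P : Matrix (Fin n) (Fin n) ℝ} (hP : ∀ i j, 0 ≤ P i j)
    {i j l : Fin n} (h1 : Reach P i j) (h2 : Reach P j l) : Reach P i l := by
  obtain ⟨k, hk⟩ := h2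
  induction k generalizing l with
  | zero => rwa [← pow_zero_eq hk]
  | succ k ih =>
    rw [pow_succ] at hk
    obtain ⟨m, hm1, hm2⟩ := mul_apply_pos_decomp (pow_entry_nonneg hP k) hP hk
    obtain ⟨k', hk'⟩ := ih hm1
    exact ⟨k' + 1, pow_pos_step hP hk' hm2⟩

lemma communicates_iff {P : Matrix (Fin n) (Fin n) ℝ} (i j : Fin n) :
    Communicates P i j ↔ (Reach P i j ∧ Reach P j i) := by
  constructor
  · rintro (rfl | ⟨⟨k, _, hk⟩, ⟨l, _, hl⟩⟩)
    · exact ⟨reach_refl P i, reach_refl P i⟩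
    · exact ⟨⟨k, hk⟩, ⟨l, hl⟩⟩
  · rintro ⟨⟨k, hk⟩, ⟨l, hl⟩⟩
    by_cases h : i = j
    · exact Or.inl h
    · refine Or.inr ⟨⟨k, ?_, hk⟩, ⟨l, ?_, hl⟩⟩
      · rcases Nat.eq_zero_or_pos k with rfl | hp
        · exact absurd (pow_zero_eq hk) h
        · exact hp
      · rcases Nat.eq_zero_or_pos l with rfl | hp
        · exact absurd (pow_zero_eq hl) (fun e => h e.symm)
        · exact hp

lemma reach_mem_closed {P : Matrix (Fin n) (Fin n) ℝ} (hP : ∀ i j, 0 ≤ P i j)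
    {G : Set (Fin n)} (hcl : ∀ i ∈ G, ∀ j, 0 < P i j → j ∈ G)
    {i j : Fin n} (hi : i ∈ G) (hij : Reach P i j) : j ∈ G := by
  obtain ⟨k, hk⟩ := hij
  induction k generalizing j with
  | zero => rwa [← pow_zero_eq hk]
  | succ k ih =>
    rw [pow_succ] at hk
    obtain ⟨m, hm1, hm2⟩ := mul_apply_pos_decomp (pow_entry_nonneg hP k) hP hk
    exact hcl m (ih hm1) j hm2

lemma mem_bclosed_of_pow {P : Matrix (Fin n) (Fin n) ℝ} (hP : ∀ i j, 0 ≤ P i j)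
    {S : Set (Fin n)} (hcl : ∀ k j, 0 < P k j → j ∈ S → k ∈ S) :
    ∀ (k : ℕ) (i j : Fin n), 0 < (P ^ k) i j → j ∈ S → i ∈ S := by
  intro k
  induction k with
  | zero => intro i j hk hj; rwa [pow_zero_eq hk]
  | succ k ih =>
    intro i j hk hj
    rw [pow_succ'] at hk
    obtain ⟨m, hm1, hm2⟩ := mul_apply_pos_decomp hP (pow_entry_nonneg hP k) hk
    exact hcl i m hm1 (ih m j hm2 hj)

lemma exists_final_class {P : Matrix (Fin n) (Fin n) ℝ} (hP : ∀ i j, 0 ≤ P i j)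
    (G : Set (Fin n)) (hne : G.Nonempty)
    (hcl : ∀ i ∈ G, ∀ j, 0 < P i j → j ∈ G) :
    ∃ C : Set (Fin n), IsCommClass P C ∧ C ⊆ G ∧ ∀ i ∈ C, ∀ j, 0 < P i j → j ∈ C := by
  classical
  set R : Fin n → Finset (Fin n) := fun i => Finset.univ.filter (fun j => Reach P i j) with hR
  obtain ⟨i₀g, hg⟩ := hne
  obtain ⟨i₀, hi₀mem, hmin⟩ :=
    Finset.exists_min_image (Finset.univ.filter (fun i => i ∈ G)) (fun i => (R i).card)
      ⟨i₀g, Finset.mem_filter.2 ⟨Finset.mem_univ _, hg⟩⟩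
  have hi₀G : i₀ ∈ G := (Finset.mem_filter.1 hi₀mem).2
  have key : ∀ j, Reach P i₀ j → Reach P j i₀ := by
    intro j hj
    have hjG : j ∈ G := reach_mem_closed hP hcl hi₀G hj
    have hsub : R j ⊆ R i₀ := by
      intro l hl
      rw [hR] at hl ⊢
      simp only [Finset.mem_filter, Finset.mem_univ, true_and] at hl ⊢
      exact reach_trans hP hj hl
    have hcard : (R i₀).card ≤ (R j).card :=
      hmin j (Finset.mem_filter.2 ⟨Finset.mem_univ _, hjG⟩)
    have heq : R j = R i₀ := Finset.eq_of_subset_of_card_le hsub hcard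
    have : i₀ ∈ R j := by
      rw [heq, hR]
      simp only [Finset.mem_filter, Finset.mem_univ, true_and]
      exact reach_refl P i₀
    rw [hR] at this
    simpa using this
  have hmemC : ∀ j, Communicates P i₀ j ↔ Reach P i₀ j := by
    intro j
    rw [communicates_iff]
    exact ⟨fun h => h.1, fun h => ⟨h, key j h⟩⟩
  refine ⟨{j | Communicates P i₀ j}, ⟨i₀, rfl⟩, ?_, ?_⟩
  · intro j hj
    exact reach_mem_closed hP hcl hi₀G ((hmemC j).1 hj)
  · intro i hi j hij
    have h1 : Reach P i₀ i := (hmemC i).1 hi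
    have h2 : Reach P i₀ j := reach_trans hP h1 ⟨1, by rwa [pow_one]⟩
    exact (hmemC j).2 h2

lemma master (α μ : Fin n → ℝ) (P : Matrix (Fin n) (Fin n) ℝ)
    (hα : ∀ i, 0 ≤ α i) (hμ : ∀ i, 0 < μ i)
    (hP : ∀ i j, 0 ≤ P i j) (hPsub : ∀ i, ∑ j, P i j ≤ 1)
    (hNI : NI α P)
    (u v : Fin n → ℝ)
    (hu : ∀ i, u i = α i + ∑ j, min (u j) (μ j) * P j i)
    (hv : ∀ i, v i ≤ α i + ∑ j, min (v j) (μ j) * P j i)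
    (huv : ∀ j, v j ≤ u j → 0 ≤ u j) :
    ∀ i, v i ≤ u i := by
  by_contra hcon
  push_neg at hcon
  obtain ⟨iw, hiw⟩ := hcon
  classical
  set F : Finset (Fin n) := Finset.univ.filter (fun i => u i < v i) with hFdef
  have hmemF : ∀ i, i ∈ F ↔ u i < v i := by
    intro i; rw [hFdef]; simp
  have hiwF : iw ∈ F := (hmemF iw).2 hiw
  set d : Fin n → ℝ := fun j => v j - u j with hd
  set c : Fin n → ℝ := fun j => min (v j) (μ j) - min (u j) (μ j) with hc
  have hdpos : ∀ j ∈ F, 0 < d j := fun j hj => sub_pos.2 ((hmemF j).1 hj)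
  have hcled : ∀ j ∈ F, c j ≤ d j := by
    intro j hj
    have h := ((hmemF j).1 hj).le
    simp only [hc, hd, min_def]
    split_ifs <;> [linarith; linarith [hμ j]; linarith; linarith]
  have hcpos : ∀ j ∈ F, 0 ≤ c j := by
    intro j hj
    have h := ((hmemF j).1 hj).le
    exact sub_nonneg.2 (min_le_min h le_rfl)
  have hcnpos : ∀ j, j ∉ F → c j ≤ 0 := by
    intro j hj
    have h : v j ≤ u j := le_of_not_gt (fun h => hj ((hmemF j).2 h))
    exact sub_nonpos.2 (min_le_min h le_rfl)
  have hdiff : ∀ i, d i ≤ ∑ j, c j * P j i := by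
    intro i
    have h1 := hv i
    have h2 := hu i
    have h3 : d i ≤ (∑ j, min (v j) (μ j) * P j i) - ∑ j, min (u j) (μ j) * P j i := by
      simp only [hd]; linarith
    calc d i ≤ _ := h3
      _ = ∑ j, c j * P j i := by
          rw [← Finset.sum_sub_distrib]
          exact Finset.sum_congr rfl fun j _ => (sub_mul _ _ _).symm
  set t : Fin n → ℝ := fun j => ∑ i ∈ F, P j i with ht
  have htnn : ∀ j, 0 ≤ t j := fun j => Finset.sum_nonneg fun i _ => hP j i
  have htle1 : ∀ j, t j ≤ 1 := by
    intro j
    refine le_trans ?_ (hPsub j)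
    exact Finset.sum_le_sum_of_subset_of_nonneg (Finset.subset_univ F)
      (fun i _ _ => hP j i)
  -- chain of inequalities
  have eA : ∑ i ∈ F, d i ≤ ∑ i ∈ F, ∑ j, c j * P j i :=
    Finset.sum_le_sum fun i _ => hdiff i
  have eB : ∑ i ∈ F, ∑ j, c j * P j i = ∑ j, c j * t j := by
    rw [Finset.sum_comm]
    exact Finset.sum_congr rfl fun j _ => by rw [ht, Finset.mul_sum]
  have eSplit : ∑ j, c j * t j = ∑ j ∈ F, c j * t j + ∑ j ∈ Fᶜ, c j * t j :=
    (Finset.sum_add_sum_compl F _).symm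
  have eCterm : ∀ j ∈ Fᶜ, c j * t j ≤ 0 := fun j hj =>
    mul_nonpos_of_nonpos_of_nonneg (hcnpos j (Finset.mem_compl.1 hj)) (htnn j)
  have eC : ∑ j ∈ Fᶜ, c j * t j ≤ 0 := Finset.sum_nonpos eCterm
  have eDterm : ∀ j ∈ F, c j * t j ≤ c j := fun j hj =>
    mul_le_of_le_one_right (hcpos j hj) (htle1 j)
  have eD : ∑ j ∈ F, c j * t j ≤ ∑ j ∈ F, c j := Finset.sum_le_sum eDterm
  have eE : ∑ j ∈ F, c j ≤ ∑ j ∈ F, d j := Finset.sum_le_sum hcled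
  -- all equalities
  have hA' : ∑ i ∈ F, d i = ∑ i ∈ F, ∑ j, c j * P j i := by
    apply le_antisymm eA
    rw [eB, eSplit]; linarith
  have Heq1 : ∀ i ∈ F, d i = ∑ j, c j * P j i :=
    fun i hi => ((Finset.sum_eq_sum_iff_of_le fun i _ => hdiff i).1 hA' i hi)
  have hCzero : ∑ j ∈ Fᶜ, c j * t j = 0 := by
    have := hA'
    rw [eB, eSplit] at this
    linarith
  have Hcompl : ∀ j, j ∉ F → c j * t j = 0 := by
    intro j hj
    have h := (Finset.sum_eq_zero_iff_of_nonpos eCterm).1 hCzero j (Finset.mem_compl.2 hj)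
    exact h
  have hDeq : ∑ j ∈ F, c j * t j = ∑ j ∈ F, c j := by
    have := hA'
    rw [eB, eSplit] at this
    linarith
  have Heq4 : ∀ j ∈ F, c j * t j = c j :=
    fun j hj => (Finset.sum_eq_sum_iff_of_le eDterm).1 hDeq j hj
  have hEeq : ∑ j ∈ F, c j = ∑ j ∈ F, d j := by
    have := hA'
    rw [eB, eSplit] at this
    linarith
  have Heq5 : ∀ j ∈ F, c j = d j :=
    fun j hj => (Finset.sum_eq_sum_iff_of_le hcled).1 hEeq j hj
  -- consequences
  have ht1F : ∀ j ∈ F, t j = 1 := by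
    intro j hj
    have h1 := Heq4 j hj
    have h2 : 0 < c j := by rw [Heq5 j hj]; exact hdpos j hj
    exact mul_left_cancel₀ (ne_of_gt h2) (by rw [mul_one]; exact h1)
  have hrow1 : ∀ j ∈ F, ∑ i, P j i = 1 := by
    intro j hj
    refine le_antisymm (hPsub j) ?_
    rw [← ht1F j hj, ht]
    exact Finset.sum_le_sum_of_subset_of_nonneg (Finset.subset_univ F) fun i _ _ => hP j i
  have hclosedF : ∀ j ∈ F, ∀ i, i ∉ F → P j i = 0 := by
    intro j hj i hi
    have hsplit : ∑ i' ∈ F, P j i' + ∑ i' ∈ Fᶜ, P j i' = ∑ i', P j i' :=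
      Finset.sum_add_sum_compl F _
    have h0 : ∑ i' ∈ Fᶜ, P j i' = 0 := by
      rw [hrow1 j hj] at hsplit
      have := ht1F j hj
      rw [ht] at this
      linarith
    exact (Finset.sum_eq_zero_iff_of_nonneg fun i' _ => hP j i').1 h0 i (Finset.mem_compl.2 hi)
  have hvleμ : ∀ j ∈ F, v j ≤ μ j := by
    intro j hj
    have h1 := Heq5 j hj
    have h2 := (hmemF j).1 hj
    simp only [hc, hd, min_def] at h1
    by_contra hcontra
    push_neg at hcontra
    split_ifs at h1 <;> linarith
  have hminv : ∀ j ∈ F, min (v j) (μ j) = v j := fun j hj => min_eq_left (hvleμ j hj)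
  have hminu : ∀ j ∈ F, min (u j) (μ j) = u j := fun j hj =>
    min_eq_left (le_of_lt (lt_of_lt_of_le ((hmemF j).1 hj) (hvleμ j hj)))
  have hveq : ∀ i ∈ F, v i = α i + ∑ j, min (v j) (μ j) * P j i := by
    intro i hi
    have h1 := Heq1 i hi
    have h2 := hu i
    have h3 : v i = u i + d i := by simp [hd]
    have h4 : ∑ j, (min (u j) (μ j) * P j i + c j * P j i)
        = ∑ j, min (v j) (μ j) * P j i := by
      refine Finset.sum_congr rfl fun j _ => ?_
      rw [← add_mul]
      congr 1
      simp [hc]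
    rw [h3, h2, h1, add_assoc, ← Finset.sum_add_distrib, h4]
  -- final class
  have hGclosed : ∀ i ∈ (↑F : Set (Fin n)), ∀ j, 0 < P i j → j ∈ (↑F : Set (Fin n)) := by
    intro i hi j hij
    by_contra hj
    rw [Finset.mem_coe] at hi hj
    exact absurd (hclosedF i hi j hj) (ne_of_gt hij)
  obtain ⟨C, hCcomm, hCsub, hCclosed⟩ :=
    exists_final_class hP (↑F) ⟨iw, Finset.mem_coe.2 hiwF⟩ hGclosed
  set CF : Finset (Fin n) := Finset.univ.filter (fun i => i ∈ C) with hCF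
  have hmemCF : ∀ i, i ∈ CF ↔ i ∈ C := by intro i; rw [hCF]; simp
  have hCFF : ∀ i ∈ CF, i ∈ F := fun i hi => Finset.mem_coe.1 (hCsub ((hmemCF i).1 hi))
  set s : Fin n → ℝ := fun j => ∑ i ∈ CF, P j i with hs
  have hsnn : ∀ j, 0 ≤ s j := fun j => Finset.sum_nonneg fun i _ => hP j i
  have hslet : ∀ j, s j ≤ t j := by
    intro j
    exact Finset.sum_le_sum_of_subset_of_nonneg (fun i hi => hCFF i hi) fun i _ _ => hP j i
  have hs1 : ∀ j ∈ CF, s j = 1 := by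
    intro j hj
    have hz : ∀ i ∈ Finset.univ, i ∉ CF → P j i = 0 := by
      intro i _ hiCF
      by_contra hne
      have hpos : 0 < P j i := lt_of_le_of_ne (hP j i) (Ne.symm hne)
      exact hiCF ((hmemCF i).2 (hCclosed j ((hmemCF j).1 hj) i hpos))
    show ∑ i ∈ CF, P j i = 1
    calc ∑ i ∈ CF, P j i = ∑ i, P j i := Finset.sum_subset (Finset.subset_univ CF) hz
      _ = 1 := hrow1 j (hCFF j hj)
  have hg2 : ∑ j ∈ CFᶜ, c j * s j = 0 := by
    have h1 : ∑ i ∈ CF, d i = ∑ j, c j * s j := by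
      have he := Finset.sum_congr rfl (fun i (hi : i ∈ CF) => Heq1 i (hCFF i hi))
      rw [he, Finset.sum_comm]
      refine Finset.sum_congr rfl fun j _ => ?_
      rw [Finset.mul_sum]
    have h2 : ∑ j, c j * s j = ∑ j ∈ CF, c j * s j + ∑ j ∈ CFᶜ, c j * s j :=
      (Finset.sum_add_sum_compl CF _).symm
    have h3 : ∑ j ∈ CF, c j * s j = ∑ j ∈ CF, d j := by
      refine Finset.sum_congr rfl fun j hj => ?_
      rw [hs1 j hj, mul_one, Heq5 j (hCFF j hj)]
    rw [h2, h3] at h1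
    linarith
  have hcszero : ∀ j, j ∉ F → c j * s j = 0 := by
    intro j hj
    rcases eq_or_lt_of_le (hsnn j) with h0 | h0
    · rw [← h0, mul_zero]
    · have htj : 0 < t j := lt_of_lt_of_le h0 (hslet j)
      have hc0 : c j = 0 := by
        rcases mul_eq_zero.1 (Hcompl j hj) with h | h
        · exact h
        · exact absurd h (ne_of_gt htj)
      rw [hc0, zero_mul]
  have hsF : ∀ j ∈ F, j ∉ CF → s j = 0 := by
    intro j hjF hjCF
    have hnn : ∀ j' ∈ CFᶜ, 0 ≤ c j' * s j' := by
      intro j' hj'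
      rw [Finset.mem_compl] at hj'
      by_cases hF' : j' ∈ F
      · exact mul_nonneg (hcpos j' hF') (hsnn j')
      · rw [hcszero j' hF']
    have hterm : c j * s j = 0 :=
      (Finset.sum_eq_zero_iff_of_nonneg hnn).1 hg2 j (Finset.mem_compl.2 hjCF)
    have hcj : 0 < c j := by rw [Heq5 j hjF]; exact hdpos j hjF
    rcases mul_eq_zero.1 hterm with h | h
    · exact absurd h (ne_of_gt hcj)
    · exact h
  have hg3 : (∑ i ∈ CF, α i) + ∑ j ∈ CFᶜ, min (v j) (μ j) * s j = 0 := by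
    have h1 : ∑ i ∈ CF, v i = ∑ i ∈ CF, α i + ∑ j, min (v j) (μ j) * s j := by
      have he := Finset.sum_congr rfl (fun i (hi : i ∈ CF) => hveq i (hCFF i hi))
      rw [he, Finset.sum_add_distrib]
      congr 1
      rw [Finset.sum_comm]
      refine Finset.sum_congr rfl fun j _ => ?_
      rw [Finset.mul_sum]
    have h2 : ∑ j, min (v j) (μ j) * s j
        = ∑ j ∈ CF, min (v j) (μ j) * s j + ∑ j ∈ CFᶜ, min (v j) (μ j) * s j :=
      (Finset.sum_add_sum_compl CF _).symm
    have h3 : ∑ j ∈ CF, min (v j) (μ j) * s j = ∑ j ∈ CF, v j := by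
      refine Finset.sum_congr rfl fun j hj => ?_
      rw [hs1 j hj, mul_one, hminv j (hCFF j hj)]
    rw [h2, h3] at h1
    linarith
  have hterm_nn : ∀ j ∈ CFᶜ, 0 ≤ min (v j) (μ j) * s j := by
    intro j hj
    rw [Finset.mem_compl] at hj
    by_cases hF' : j ∈ F
    · rw [hsF j hF' hj, mul_zero]
    · rcases eq_or_lt_of_le (hsnn j) with h0 | h0
      · rw [← h0, mul_zero]
      · have ht0 : 0 < t j := lt_of_lt_of_le h0 (hslet j)
        have hc0 : c j = 0 := by
          rcases mul_eq_zero.1 (Hcompl j hF') with h | h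
          · exact h
          · exact absurd h (ne_of_gt ht0)
        have hvu : min (v j) (μ j) = min (u j) (μ j) := by
          have hx : min (v j) (μ j) - min (u j) (μ j) = 0 := hc0
          linarith
        have huj : 0 ≤ u j := huv j (le_of_not_gt fun h => hF' ((hmemF j).2 h))
        rw [hvu]
        exact mul_nonneg (le_min huj (hμ j).le) (hsnn j)
  have hαCF : ∀ i ∈ CF, α i = 0 := by
    have h1 : 0 ≤ ∑ j ∈ CFᶜ, min (v j) (μ j) * s j := Finset.sum_nonneg hterm_nn
    have h2 : 0 ≤ ∑ i ∈ CF, α i := Finset.sum_nonneg fun i _ => hα i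
    have hsum0 : ∑ i ∈ CF, α i = 0 := by linarith
    exact fun i hi => (Finset.sum_eq_zero_iff_of_nonneg fun i _ => hα i).1 hsum0 i hi
  have hminvs : ∀ j, j ∉ CF → min (v j) (μ j) * s j = 0 := by
    intro j hj
    have h1 : 0 ≤ ∑ j ∈ CFᶜ, min (v j) (μ j) * s j := Finset.sum_nonneg hterm_nn
    have h2 : 0 ≤ ∑ i ∈ CF, α i := Finset.sum_nonneg fun i _ => hα i
    have hsum0 : ∑ j ∈ CFᶜ, min (v j) (μ j) * s j = 0 := by linarith
    exact (Finset.sum_eq_zero_iff_of_nonneg hterm_nn).1 hsum0 j (Finset.mem_compl.2 hj)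
  -- the backward-closed zero set
  set SS : Set (Fin n) := {j | j ∈ C ∨ (j ∉ F ∧ min (u j) (μ j) = 0)} with hSS
  have hmemSS : ∀ j, j ∈ SS ↔ (j ∈ C ∨ (j ∉ F ∧ min (u j) (μ j) = 0)) := by
    intro j; rw [hSS]; rfl
  have hzero : ∀ m, m ∉ F → min (u m) (μ m) = 0 →
      α m = 0 ∧ ∀ k, 0 < P k m → (k ∉ F ∧ min (u k) (μ k) = 0) := by
    intro m hmF hm0
    have hum : 0 ≤ u m := huv m (le_of_not_gt fun h => hmF ((hmemF m).2 h))
    have hum0 : u m = 0 := by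
      rcases le_total (u m) (μ m) with h | h
      · rw [min_eq_left h] at hm0; exact hm0
      · rw [min_eq_right h] at hm0; linarith [hμ m]
    have hterm_nn2 : ∀ k ∈ Finset.univ, 0 ≤ min (u k) (μ k) * P k m := by
      intro k _
      by_cases hkF : k ∈ F
      · rw [hclosedF k hkF m hmF, mul_zero]
      · have huk : 0 ≤ u k := huv k (le_of_not_gt fun h => hkF ((hmemF k).2 h))
        exact mul_nonneg (le_min huk (hμ k).le) (hP k m)
    have heqm := hu m
    rw [hum0] at heqm
    have h1 : 0 ≤ ∑ k, min (u k) (μ k) * P k m := Finset.sum_nonneg hterm_nn2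
    have hsum0 : ∑ k, min (u k) (μ k) * P k m = 0 := by linarith [hα m]
    have hαm : α m = 0 := by linarith [hα m]
    refine ⟨hαm, ?_⟩
    intro k hk
    have hkF : k ∉ F := by
      intro hkF
      rw [hclosedF k hkF m hmF] at hk
      exact lt_irrefl 0 hk
    refine ⟨hkF, ?_⟩
    have hterm0 : min (u k) (μ k) * P k m = 0 :=
      (Finset.sum_eq_zero_iff_of_nonneg hterm_nn2).1 hsum0 k (Finset.mem_univ k)
    rcases mul_eq_zero.1 hterm0 with h | h
    · exact h
    · exact absurd h (ne_of_gt hk)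
  have hback : ∀ k j, 0 < P k j → j ∈ SS → k ∈ SS := by
    intro k j hkj hj
    rcases (hmemSS j).1 hj with hjC | ⟨hjF, hj0⟩
    · by_cases hkC : k ∈ C
      · exact (hmemSS k).2 (Or.inl hkC)
      · have hkCF : k ∉ CF := fun h => hkC ((hmemCF k).1 h)
        have hjCF : j ∈ CF := (hmemCF j).2 hjC
        have hsk : 0 < s k := by
          have hle : P k j ≤ s k := Finset.single_le_sum (fun i _ => hP k i) hjCF
          linarith
        have hkF : k ∉ F := by
          intro hkF
          rw [hsF k hkF hkCF] at hsk
          exact lt_irrefl 0 hsk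
        have hmin0 : min (v k) (μ k) = 0 := by
          rcases mul_eq_zero.1 (hminvs k hkCF) with h | h
          · exact h
          · exact absurd h (ne_of_gt hsk)
        have htk : 0 < t k := lt_of_lt_of_le hsk (hslet k)
        have hck : c k = 0 := by
          rcases mul_eq_zero.1 (Hcompl k hkF) with h | h
          · exact h
          · exact absurd h (ne_of_gt htk)
        have hu0 : min (u k) (μ k) = 0 := by
          have hx : min (v k) (μ k) - min (u k) (μ k) = 0 := hck
          linarith
        exact (hmemSS k).2 (Or.inr ⟨hkF, hu0⟩)
    · rcases (hzero j hjF hj0).2 k hkj with ⟨hkF, hk0⟩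
      exact (hmemSS k).2 (Or.inr ⟨hkF, hk0⟩)
  have hαS : ∀ j ∈ SS, α j = 0 := by
    intro j hj
    rcases (hmemSS j).1 hj with hjC | ⟨hjF, hj0⟩
    · exact hαCF j ((hmemCF j).2 hjC)
    · exact (hzero j hjF hj0).1
  rcases hNI C hCcomm with hfill | hdrain
  · rcases hfill with ⟨i, hiC, hαi⟩ | ⟨j, hαj, l, hlC, k, _, hkpos⟩
    · exact absurd (hαCF i ((hmemCF i).2 hiC)) (ne_of_gt hαi)
    · have hlS : l ∈ SS := (hmemSS l).2 (Or.inl hlC)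
      have hjS : j ∈ SS := mem_bclosed_of_pow hP hback k j l hkpos hlS
      exact absurd (hαS j hjS) (ne_of_gt hαj)
  · rcases hdrain with ⟨i, hiC, hrow⟩ | ⟨i, hiC, j, hjC, hPij⟩
    · rw [hrow1 i (hCFF i ((hmemCF i).2 hiC))] at hrow
      exact lt_irrefl 1 hrow
    · exact hjC (hCclosed i hiC j hPij)

end TEaux

/-- under the NI condition the traffic equation has at most one
solution. -/
theorem traffic_equation_unique_solution (n : ℕ)
    (α μ : Fin n → ℝ) (P : Matrix (Fin n) (Fin n) ℝ)
    (hα : ∀ i, 0 ≤ α i) (hμ : ∀ i, 0 < μ i)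
    (hP : ∀ i j, 0 ≤ P i j) (hPsub : ∀ i, ∑ j, P i j ≤ 1)
    (hNI : NI α P)
    (x y : Fin n → ℝ)
    (hxeq : ∀ i, x i = α i + ∑ j, min (x j) (μ j) * P j i)
    (hyeq : ∀ i, y i = α i + ∑ j, min (y j) (μ j) * P j i) :
    x = y := by
  have hzero_sub : ∀ i, (fun _ : Fin n => (0:ℝ)) i
      ≤ α i + ∑ j, min ((fun _ : Fin n => (0:ℝ)) j) (μ j) * P j i := by
    intro i
    have h0 : ∑ j, min (0:ℝ) (μ j) * P j i = 0 :=
      Finset.sum_eq_zero fun j _ => by rw [min_eq_left (hμ j).le, zero_mul]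
    simpa [h0] using hα i
  have hxnn : ∀ i, (0:ℝ) ≤ x i := fun i =>
    TEaux.master α μ P hα hμ hP hPsub hNI x (fun _ => 0) hxeq hzero_sub (fun _ h => h) i
  have hynn : ∀ i, (0:ℝ) ≤ y i := fun i =>
    TEaux.master α μ P hα hμ hP hPsub hNI y (fun _ => 0) hyeq hzero_sub (fun _ h => h) i
  have hxy : ∀ i, x i ≤ y i :=
    TEaux.master α μ P hα hμ hP hPsub hNI y x hyeq (fun i => (hxeq i).le) (fun j _ => hynn j)
  have hyx : ∀ i, y i ≤ x i :=
    TEaux.master α μ P hα hμ hP hPsub hNI x y hxeq (fun i => (hyeq i).le) (fun j _ => hxnn j)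
  funext i
  exact le_antisymm (hxy i) (hyx i)
end

section
/- If the network (α, μ, P) contains an isolated communicating class, then the traffic equation λ = α + (λ ∧ μ)P admits a solution λ that has at least one strictly negative entry. Consequently, (α, μ, P) is non-isolated if and only if every solution of the traffic equation is nonnegative. -/
open scoped Classical

/-!
For an isolated class `C`, the least nonnegative solution of the traffic equation vanishes on `C`
and on everything upstream of it, while `P_CC` is stochastic and so has a nonzero left fixed
vector `u`. On `C` the congestion term `min (lam j) (μ j)` is then linear in a small perturbation
`t • u`, so `lam + t • u` is again a solution, with a negative entry for the right sign of `u`.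

Conversely, if a solution `lam` has negative entries, summing the equation over `{lam < 0}` and over
`{lam ≤ 0}` exhibits `0` as a sum of nonnegative terms. Hence `{lam < 0}` is closed with stochastic
rows and nothing upstream of `{lam ≤ 0}` receives input, so a closed communicating class inside
`{lam < 0}` is isolated.
-/

open Matrix Relation Set

namespace Relation

variable {ι : Type*} {r : ι → ι → Prop} {s : Set ι}

theorem ReflTransGen.mem_of_closed (hs : ∀ i ∈ s, ∀ j, r i j → j ∈ s) {a b : ι}
    (h : ReflTransGen r a b) (ha : a ∈ s) : b ∈ s := by
  induction h with
  | refl => exact ha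
  | tail _ hbc ih => exact hs _ ih _ hbc

/-- A point of `s` whose set of successors is minimal will do. -/
theorem exists_mem_forall_reflTransGen_symm [Finite ι] (hne : s.Nonempty)
    (hs : ∀ i ∈ s, ∀ j, r i j → j ∈ s) :
    ∃ i ∈ s, ∀ j, ReflTransGen r i j → ReflTransGen r j i := by
  obtain ⟨i, his, hmin⟩ :=
    exists_minimalFor_of_wellFoundedLT (· ∈ s) (fun i => {j | ReflTransGen r i j}) hne
  refine ⟨i, his, fun j hij => ?_⟩
  have hsub : {k | ReflTransGen r j k} ⊆ {k | ReflTransGen r i k} := fun k hjk => hij.trans hjk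
  exact hmin (hij.mem_of_closed hs his) hsub ReflTransGen.refl

end Relation

theorem exists_fixedPt_mem_Icc_of_monotone {α : Type*} [ConditionallyCompleteLattice α]
    {f : α → α} (hf : Monotone f) {a b : α} (hab : a ≤ b) (ha : a ≤ f a) (hb : f b ≤ b) :
    ∃ x ∈ Icc a b, f x = x := by
  set S := {x | a ≤ x ∧ f x ≤ x}
  have hbS : b ∈ S := ⟨hab, hb⟩
  have hS : BddBelow S := ⟨a, fun x hx => hx.1⟩
  have ha_le : a ≤ sInf S := le_csInf ⟨b, hbS⟩ fun x hx => hx.1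
  have hfx_le : f (sInf S) ≤ sInf S :=
    le_csInf ⟨b, hbS⟩ fun x hx => (hf (csInf_le hS hx)).trans hx.2
  have hfx_mem : f (sInf S) ∈ S := ⟨ha.trans (hf ha_le), hf hfx_le⟩
  exact ⟨sInf S, ⟨ha_le, csInf_le hS hbS⟩, hfx_le.antisymm (csInf_le hS hfx_mem)⟩

open Filter Topology in
theorem exists_pos_smul_le {ι : Type*} [Finite ι] (u : ι → ℝ) {μ : ι → ℝ} (hμ : ∀ i, 0 < μ i) :
    ∃ t : ℝ, 0 < t ∧ t • u ≤ μ := by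
  have h : ∀ᶠ t in 𝓝[>] (0 : ℝ), ∀ i, t * u i < μ i :=
    eventually_all.2 fun i => nhdsWithin_le_nhds <|
      ((continuous_mul_const (u i)).tendsto' 0 0 (zero_mul _)).eventually (gt_mem_nhds (hμ i))
  obtain ⟨t, ht, htpos⟩ := (h.and self_mem_nhdsWithin).exists
  exact ⟨t, htpos, fun i => (ht i).le⟩

theorem Matrix.exists_vecMul_eq_self_of_sum_row_eq_one {ι K : Type*} [Fintype ι]
    [DecidableEq ι] [Nonempty ι] [Field K] {Q : Matrix ι ι K} (hQ : ∀ i, ∑ j, Q i j = 1) :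
    ∃ w ≠ 0, w ᵥ* Q = w := by
  have hdet : (Q - 1).det = 0 := by
    refine exists_mulVec_eq_zero_iff.mp ⟨fun _ => 1, fun h => ?_, ?_⟩
    · simpa using congrFun h (Classical.arbitrary ι)
    · ext i
      simp [mulVec, dotProduct, hQ i, one_apply]
  obtain ⟨w, hw, hwQ⟩ := exists_vecMul_eq_zero_iff.mpr hdet
  exact ⟨w, hw, by rwa [vecMul_sub, vecMul_one, sub_eq_zero] at hwQ⟩

section NonnegMatrix

variable {ι : Type*} [Fintype ι] {P : Matrix ι ι ℝ}

theorem vecMul_mono_of_nonneg (hP : ∀ i j, 0 ≤ P i j) : Monotone (· ᵥ* P) := fun _ _ h i =>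
  Finset.sum_le_sum fun j _ => mul_le_mul_of_nonneg_right (h j) (hP j i)

theorem apply_eq_zero_of_sum_eq_one (hP : ∀ i j, 0 ≤ P i j) (hPsub : ∀ i, ∑ j, P i j ≤ 1)
    {S : Finset ι} {i : ι} (h : ∑ j ∈ S, P i j = 1) {j : ι} (hj : j ∉ S) : P i j = 0 := by
  have hout : ∑ j ∈ Sᶜ, P i j = 0 := by
    have := Finset.sum_add_sum_compl S (P i)
    linarith [hPsub i, Finset.sum_nonneg fun j (_ : j ∈ Sᶜ) => hP i j]
  exact (Finset.sum_eq_zero_iff_of_nonneg fun j _ => hP i j).mp hout j (Finset.mem_compl.mpr hj)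

theorem pow_succ_apply_pos_iff [DecidableEq ι] (hP : ∀ i j, 0 ≤ P i j) {k : ℕ} {i j : ι} :
    0 < (P ^ (k + 1)) i j ↔ ∃ m, 0 < (P ^ k) i m ∧ 0 < P m j := by
  rw [pow_succ, mul_apply, Finset.sum_pos_iff_of_nonneg fun m _ =>
    mul_nonneg (pow_apply_nonneg hP k i m) (hP m j)]
  simp only [Finset.mem_univ, true_and]
  exact exists_congr fun m => ⟨fun h => ⟨pos_of_mul_pos_left h (hP m j),
    pos_of_mul_pos_right h (pow_apply_nonneg hP k i m)⟩, fun h => mul_pos h.1 h.2⟩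

theorem exists_pow_apply_pos_iff_transGen [DecidableEq ι] (hP : ∀ i j, 0 ≤ P i j) {i j : ι} :
    (∃ k ≥ 1, 0 < (P ^ k) i j) ↔ TransGen (0 < P · ·) i j := by
  constructor
  · rintro ⟨k, hk, hpos⟩
    obtain ⟨k, rfl⟩ := Nat.exists_eq_add_of_le' hk
    clear hk
    induction k generalizing j with
    | zero => exact .single (by simpa using hpos)
    | succ k ih =>
      obtain ⟨m, him, hmj⟩ := (pow_succ_apply_pos_iff hP).mp hpos
      exact (ih him).tail hmj
  · intro h
    induction h with
    | single hij => exact ⟨1, le_rfl, by simpa using hij⟩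
    | tail _ hmj ih =>
      obtain ⟨k, hk, hpos⟩ := ih
      exact ⟨k + 1, hk.trans k.le_succ, (pow_succ_apply_pos_iff hP).mpr ⟨_, hpos, hmj⟩⟩

end NonnegMatrix

section TrafficEquation

variable {ι : Type*} [Fintype ι] {α μ lam : ι → ℝ} {P : Matrix ι ι ℝ}

theorem traffic_eq_iff :
    (∀ i, lam i = α i + ∑ j, min (lam j) (μ j) * P j i) ↔ lam = α + (lam ⊓ μ) ᵥ* P := by
  simp only [funext_iff, Pi.add_apply, vecMul, dotProduct, Pi.inf_apply]

/-- Tarski's fixed point in `[0, b]`, where the supersolution `b` is `0` on `B` and `α + μ P`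
elsewhere. -/
theorem exists_nonneg_traffic_solution_eq_zero_on (hα : 0 ≤ α) (hμ : 0 ≤ μ)
    (hP : ∀ i j, 0 ≤ P i j) {B : Set ι} (hαB : ∀ i ∈ B, α i = 0)
    (hB : ∀ i ∈ B, ∀ j, 0 < P j i → j ∈ B) :
    ∃ lam, lam = α + (lam ⊓ μ) ᵥ* P ∧ 0 ≤ lam ∧ ∀ i ∈ B, lam i = 0 := by
  set f : (ι → ℝ) → ι → ℝ := fun l => α + (l ⊓ μ) ᵥ* P
  have hf : Monotone f := fun l l' h =>
    add_le_add_right (vecMul_mono_of_nonneg hP (inf_le_inf_right μ h)) α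
  have hf_le : ∀ l, f l ≤ α + μ ᵥ* P := fun l =>
    add_le_add_right (vecMul_mono_of_nonneg hP inf_le_right) α
  set b : ι → ℝ := Bᶜ.indicator (α + μ ᵥ* P)
  have hb : f b ≤ b := by
    intro i
    by_cases hi : i ∈ B
    · suffices ∀ j, min (b j) (μ j) * P j i = 0 by
        simp [f, b, hi, hαB i hi, vecMul, dotProduct, this]
      intro j
      rcases (hP j i).eq_or_lt with hji | hji
      · rw [← hji, mul_zero]
      · simpa [b, hB i hi j hji] using Or.inl (hμ j)
    · simpa [b, hi] using hf_le b i
  have hb0 : 0 ≤ b := indicator_nonneg fun i _ =>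
    add_nonneg (hα i) (Finset.sum_nonneg fun j _ => mul_nonneg (hμ j) (hP j i))
  obtain ⟨lam, ⟨hlam0, hlamb⟩, hlam⟩ :=
    exists_fixedPt_mem_Icc_of_monotone (a := 0) hf hb0 (by simpa [f, inf_of_le_left hμ]) hb
  refine ⟨lam, hlam.symm, hlam0, fun i hi => (hlam0 i).antisymm' ?_⟩
  simpa [b, hi] using hlamb i

theorem exists_vecMul_eq_self_neg_support_subset {C : Set ι} (hC : C.Nonempty)
    (hrow : ∀ i ∈ C, ∑ j, P i j = 1) (hout : ∀ i ∈ C, ∀ j ∉ C, P i j = 0) :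
    ∃ u : ι → ℝ, u ᵥ* P = u ∧ (∀ j ∉ C, u j = 0) ∧ ∃ j, u j < 0 := by
  have : Nonempty C := hC.to_subtype
  have hsum : ∀ (f : ι → ℝ), (∀ j ∉ C, f j = 0) → ∑ j : C, f j = ∑ j, f j := fun f hf => by
    rw [← Fintype.sum_subtype_add_sum_subtype (· ∈ C) f,
      Fintype.sum_eq_zero (fun j : {j // j ∉ C} => f j) (fun j => hf j j.2), add_zero]
  obtain ⟨w, hw, hwQ⟩ := exists_vecMul_eq_self_of_sum_row_eq_one
    (Q := P.submatrix ((↑) : C → ι) (↑)) fun i => (hsum _ (hout i i.2)).trans (hrow i i.2)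
  set v : ι → ℝ := Function.extend (↑) w 0
  have hvC : ∀ j : C, v j = w j := Subtype.val_injective.extend_apply w 0
  have hv : ∀ j ∉ C, v j = 0 := fun j hj =>
    Function.extend_apply' _ _ _ fun ⟨a, ha⟩ => hj (ha ▸ a.2)
  have hvP : v ᵥ* P = v := by
    ext i
    have hvi : (v ᵥ* P) i = ∑ j : C, w j * P j i := by
      rw [vecMul, dotProduct, ← hsum _ fun j hj => by rw [hv j hj, zero_mul]]
      simp only [hvC]
    by_cases hi : i ∈ C
    · rw [hvi, hvC ⟨i, hi⟩, ← congrFun hwQ ⟨i, hi⟩]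
      rfl
    · rw [hvi, hv i hi]
      exact Fintype.sum_eq_zero _ fun j => by rw [hout j j.2 i hi, mul_zero]
  obtain ⟨j, hj⟩ : ∃ j, v j ≠ 0 := by
    obtain ⟨j, hj⟩ := Function.ne_iff.mp hw
    exact ⟨j, by rwa [hvC]⟩
  rcases hj.lt_or_gt with hj | hj
  · exact ⟨v, hvP, hv, j, hj⟩
  · exact ⟨-v, by rw [neg_vecMul, hvP], fun j hj => by simp [hv j hj], j, by simpa⟩

theorem traffic_solution_add_smul {u : ι → ℝ} {t : ℝ} (hlam : lam = α + (lam ⊓ μ) ᵥ* P)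
    (hμ : 0 ≤ μ) (hu : u ᵥ* P = u) (hsupp : ∀ j, u j ≠ 0 → lam j = 0) (ht : t • u ≤ μ) :
    lam + t • u = α + ((lam + t • u) ⊓ μ) ᵥ* P := by
  have hinf : (lam + t • u) ⊓ μ = lam ⊓ μ + t • u := by
    ext j
    by_cases hj : u j = 0
    · simp [hj]
    · simp only [Pi.inf_apply, Pi.add_apply, hsupp j hj, zero_add]
      rw [inf_of_le_left (ht j), min_eq_left (show (0 : ℝ) ≤ μ j from hμ j), zero_add]
  rw [hinf, add_vecMul, smul_vecMul, hu, ← add_assoc, ← hlam]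

theorem sum_traffic_solution (hlam : lam = α + (lam ⊓ μ) ᵥ* P) (S : Finset ι) :
    ∑ i ∈ S, lam i = ∑ i ∈ S, α i + ∑ j, min (lam j) (μ j) * ∑ i ∈ S, P j i := by
  rw [Finset.sum_congr rfl fun i _ => congrFun hlam i]
  simp only [Pi.add_apply, vecMul, dotProduct, Pi.inf_apply, Finset.sum_add_distrib,
    Finset.mul_sum]
  rw [Finset.sum_comm]

theorem traffic_solution_balance (hlam : lam = α + (lam ⊓ μ) ᵥ* P) (hα : 0 ≤ α)
    (hμ : ∀ i, 0 < μ i) (hP : ∀ i j, 0 ≤ P i j) (hPsub : ∀ i, ∑ j, P i j ≤ 1) {S : Finset ι}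
    (hS : ∀ i ∈ S, lam i ≤ 0) (hSc : ∀ i ∉ S, 0 ≤ lam i) :
    (∀ i ∈ S, α i = 0) ∧ (∀ j ∈ S, lam j < 0 → ∑ i ∈ S, P j i = 1) ∧
      ∀ j ∉ S, 0 < lam j → ∀ i ∈ S, P j i = 0 := by
  set s : ι → ℝ := fun j => ∑ i ∈ S, P j i
  have hs0 : ∀ j, 0 ≤ s j := fun j => Finset.sum_nonneg fun i _ => hP j i
  have hs1 : ∀ j, s j ≤ 1 := fun j =>
    (Finset.sum_le_sum_of_subset_of_nonneg S.subset_univ fun i _ _ => hP j i).trans (hPsub j)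
  have hin : ∀ j ∈ S, 0 ≤ -lam j * (1 - s j) := fun j hj =>
    mul_nonneg (neg_nonneg.mpr (hS j hj)) (sub_nonneg.mpr (hs1 j))
  have hout : ∀ j ∈ Sᶜ, 0 ≤ min (lam j) (μ j) * s j := fun j hj =>
    mul_nonneg (le_min (hSc j (Finset.mem_compl.mp hj)) (hμ j).le) (hs0 j)
  have hsplit : ∑ j, min (lam j) (μ j) * s j
      = ∑ i ∈ S, lam i + ∑ j ∈ S, -lam j * (1 - s j) + ∑ j ∈ Sᶜ, min (lam j) (μ j) * s j := by
    rw [← Finset.sum_add_sum_compl S, ← Finset.sum_add_distrib]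
    congr 1
    refine Finset.sum_congr rfl fun j hj => ?_
    rw [min_eq_left ((hS j hj).trans (hμ j).le)]
    ring
  have hbal := sum_traffic_solution hlam S
  rw [hsplit] at hbal
  have hA := Finset.sum_nonneg fun i (_ : i ∈ S) => hα i
  have hB := Finset.sum_nonneg hin
  have hC := Finset.sum_nonneg hout
  refine ⟨fun i hi => (Finset.sum_eq_zero_iff_of_nonneg fun i _ => hα i).mp (by linarith) i hi,
    fun j hj hlj => ?_, fun j hj hlj i hi => ?_⟩
  · have := (Finset.sum_eq_zero_iff_of_nonneg hin).mp (by linarith) j hj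
    have := (mul_eq_zero.mp this).resolve_left (by linarith)
    linarith
  · have := (Finset.sum_eq_zero_iff_of_nonneg hout).mp (by linarith) j (Finset.mem_compl.mpr hj)
    have hsj := (mul_eq_zero.mp this).resolve_left (lt_min hlj (hμ j)).ne'
    exact (Finset.sum_eq_zero_iff_of_nonneg fun i _ => hP j i).mp hsj i hi

end TrafficEquation

section Network

variable {n : ℕ} {α μ : Fin n → ℝ} {P : Matrix (Fin n) (Fin n) ℝ}

theorem communicates_iff (hP : ∀ i j, 0 ≤ P i j) {i j : Fin n} :
    Communicates P i j ↔ ReflTransGen (0 < P · ·) i j ∧ ReflTransGen (0 < P · ·) j i := by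
  rw [Communicates, exists_pow_apply_pos_iff_transGen hP, exists_pow_apply_pos_iff_transGen hP]
  constructor
  · rintro (rfl | ⟨hij, hji⟩)
    exacts [⟨.refl, .refl⟩, ⟨hij.to_reflTransGen, hji.to_reflTransGen⟩]
  · rintro ⟨hij, hji⟩
    rcases reflTransGen_iff_eq_or_transGen.mp hij with rfl | hij
    · exact Or.inl rfl
    rcases reflTransGen_iff_eq_or_transGen.mp hji with rfl | hji
    · exact Or.inl rfl
    exact Or.inr ⟨hij, hji⟩

theorem IsCommClass.nonempty {C : Set (Fin n)} (hC : IsCommClass P C) : C.Nonempty := by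
  obtain ⟨i, rfl⟩ := hC
  exact ⟨i, Or.inl rfl⟩

theorem exists_isCommClass_subset_of_closed (hP : ∀ i j, 0 ≤ P i j) {D : Set (Fin n)}
    (hne : D.Nonempty) (hD : ∀ i ∈ D, ∀ j, 0 < P i j → j ∈ D) :
    ∃ C, IsCommClass P C ∧ C ⊆ D ∧ ∀ i ∈ C, ∀ j, 0 < P i j → j ∈ C := by
  obtain ⟨i, hiD, hrec⟩ := exists_mem_forall_reflTransGen_symm hne hD
  have hC : {j | Communicates P i j} = {j | ReflTransGen (0 < P · ·) i j} := by
    ext j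
    exact (communicates_iff hP).trans ⟨And.left, fun h => ⟨h, hrec j h⟩⟩
  refine ⟨_, ⟨i, rfl⟩, ?_, ?_⟩ <;> rw [hC]
  · exact fun j hj => hj.mem_of_closed hD hiD
  · exact fun j hj k hjk => hj.tail hjk

theorem not_canBeDrained_iff (hPsub : ∀ i, ∑ j, P i j ≤ 1) (hP : ∀ i j, 0 ≤ P i j)
    {C : Set (Fin n)} :
    ¬CanBeDrained P C ↔ (∀ i ∈ C, ∑ j, P i j = 1) ∧ ∀ i ∈ C, ∀ j ∉ C, P i j = 0 := by
  simp only [CanBeDrained, not_or, not_exists, not_and, not_lt]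
  exact and_congr (forall₂_congr fun i _ => ⟨(hPsub i).antisymm, fun h => h.ge⟩)
    (forall₂_congr fun i _ => forall₂_congr fun j _ =>
      ⟨fun h => h.antisymm (hP i j), fun h => h.le⟩)

theorem not_canBeFilled_iff (hα : 0 ≤ α) (hP : ∀ i j, 0 ≤ P i j) {C : Set (Fin n)} :
    ¬CanBeFilled α P C ↔ ∀ j, (∃ l ∈ C, ReflTransGen (0 < P · ·) j l) → α j = 0 := by
  simp only [CanBeFilled, exists_pow_apply_pos_iff_transGen hP]
  constructor
  · rintro hF j ⟨l, hl, hjl⟩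
    refine (hα j).antisymm' (not_lt.mp fun hαj => hF ?_)
    rcases reflTransGen_iff_eq_or_transGen.mp hjl with rfl | hjl
    exacts [Or.inl ⟨_, hl, hαj⟩, Or.inr ⟨j, hαj, l, hl, hjl⟩]
  · rintro h (⟨i, hi, hαi⟩ | ⟨j, hαj, l, hl, hjl⟩)
    · exact hαi.ne' (h i ⟨i, hi, .refl⟩)
    · exact hαj.ne' (h j ⟨l, hl, hjl.to_reflTransGen⟩)

theorem exists_neg_traffic_solution_of_isolated (hα : 0 ≤ α) (hμ : ∀ i, 0 < μ i)
    (hP : ∀ i j, 0 ≤ P i j) (hPsub : ∀ i, ∑ j, P i j ≤ 1) {C : Set (Fin n)} (hC : C.Nonempty)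
    (hF : ¬CanBeFilled α P C) (hD : ¬CanBeDrained P C) :
    ∃ lam, lam = α + (lam ⊓ μ) ᵥ* P ∧ ∃ i, lam i < 0 := by
  obtain ⟨hrow, hout⟩ := (not_canBeDrained_iff hPsub hP).mp hD
  set B := {j | ∃ l ∈ C, ReflTransGen (0 < P · ·) j l}
  have hCB : C ⊆ B := fun i hi => ⟨i, hi, .refl⟩
  obtain ⟨lam, hlam, -, hlamB⟩ := exists_nonneg_traffic_solution_eq_zero_on hα
    (fun i => (hμ i).le) hP ((not_canBeFilled_iff hα hP).mp hF)
    fun i ⟨l, hl, hil⟩ j hji => ⟨l, hl, .head hji hil⟩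
  obtain ⟨u, hu, huC, j, hj⟩ := exists_vecMul_eq_self_neg_support_subset hC hrow hout
  have hsupp : ∀ j, u j ≠ 0 → j ∈ C := fun j => not_imp_comm.mp (huC j)
  obtain ⟨t, ht, htu⟩ := exists_pos_smul_le u hμ
  refine ⟨lam + t • u, traffic_solution_add_smul hlam (fun i => (hμ i).le) hu
    (fun j hj => hlamB j (hCB (hsupp j hj))) htu, j, ?_⟩
  simpa [hlamB j (hCB (hsupp j hj.ne))] using mul_neg_of_pos_of_neg ht hj

theorem nonneg_of_traffic_solution_of_NI (hα : 0 ≤ α) (hμ : ∀ i, 0 < μ i)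
    (hP : ∀ i j, 0 ≤ P i j) (hPsub : ∀ i, ∑ j, P i j ≤ 1) (hNI : NI α P) {lam : Fin n → ℝ}
    (hlam : lam = α + (lam ⊓ μ) ᵥ* P) : 0 ≤ lam := by
  by_contra hneg
  obtain ⟨i₀, hi₀⟩ : ∃ i, lam i < 0 := by simpa [Pi.le_def] using hneg
  set D := Finset.univ.filter (lam · < 0)
  set G := Finset.univ.filter (lam · ≤ 0)
  have hmemD : ∀ i, i ∈ D ↔ lam i < 0 := by simp [D]
  have hmemG : ∀ i, i ∈ G ↔ lam i ≤ 0 := by simp [G]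
  obtain ⟨-, hDrow, -⟩ := traffic_solution_balance hlam hα hμ hP hPsub
    (fun i hi => ((hmemD i).mp hi).le) fun i hi => not_lt.mp (mt (hmemD i).mpr hi)
  obtain ⟨hαG, -, hGin⟩ := traffic_solution_balance hlam hα hμ hP hPsub
    (fun i hi => (hmemG i).mp hi) fun i hi => (not_le.mp (mt (hmemG i).mpr hi)).le
  have hDclosed : ∀ i ∈ (D : Set (Fin n)), ∀ j, 0 < P i j → j ∈ (D : Set (Fin n)) :=
    fun i hi j hij => by_contra fun hj => hij.ne' <|
      apply_eq_zero_of_sum_eq_one hP hPsub (hDrow i hi ((hmemD i).mp hi)) hj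
  have hGup : ∀ i ∈ (G : Set (Fin n)), ∀ j, 0 < P j i → j ∈ (G : Set (Fin n)) :=
    fun i hi j hji => by_contra fun hj => hji.ne' <|
      hGin j hj (not_le.mp (mt (hmemG j).mpr hj)) i hi
  obtain ⟨C, hC, hCD, hCclosed⟩ :=
    exists_isCommClass_subset_of_closed hP ⟨i₀, (hmemD i₀).mpr hi₀⟩ hDclosed
  rcases hNI C hC with hF | hDr
  · refine (not_canBeFilled_iff hα hP).mpr (fun j ⟨l, hl, hjl⟩ => hαG j ?_) hF
    exact (reflTransGen_swap.mpr hjl).mem_of_closed hGup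
      ((hmemG l).mpr ((hmemD l).mp (hCD hl)).le)
  · refine (not_canBeDrained_iff hPsub hP).mpr ⟨fun k hk => ?_, fun k hk j hj => ?_⟩ hDr
    · exact (hPsub k).antisymm ((hDrow k (hCD hk) ((hmemD k).mp (hCD hk))).symm.trans_le
        (Finset.sum_le_sum_of_subset_of_nonneg D.subset_univ fun j _ _ => hP k j))
    · exact (hP k j).eq_or_lt.resolve_right (fun hkj => hj (hCclosed k hk j hkj)) |>.symm

end Network

/-- if the network contains an isolated class then the traffic
equation has a solution with a strictly negative entry; consequently NI is
equivalent to all solutions being nonnegative. -/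
theorem isolated_class_negative_solution_and_NI_iff (n : ℕ)
    (α μ : Fin n → ℝ) (P : Matrix (Fin n) (Fin n) ℝ)
    (hα : ∀ i, 0 ≤ α i) (hμ : ∀ i, 0 < μ i)
    (hP : ∀ i j, 0 ≤ P i j) (hPsub : ∀ i, ∑ j, P i j ≤ 1) :
    ((∃ C, IsCommClass P C ∧ ¬ CanBeFilled α P C ∧ ¬ CanBeDrained P C) →
      ∃ lam : Fin n → ℝ,
        (∀ i, lam i = α i + ∑ j, min (lam j) (μ j) * P j i) ∧ ∃ i, lam i < 0) ∧
    (NI α P ↔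
      ∀ lam : Fin n → ℝ,
        (∀ i, lam i = α i + ∑ j, min (lam j) (μ j) * P j i) → ∀ i, 0 ≤ lam i) := by
  have hneg : ∀ C, IsCommClass P C → ¬CanBeFilled α P C → ¬CanBeDrained P C →
      ∃ lam : Fin n → ℝ,
        (∀ i, lam i = α i + ∑ j, min (lam j) (μ j) * P j i) ∧ ∃ i, lam i < 0 := by
    intro C hC hF hD
    obtain ⟨lam, hlam, hi⟩ :=
      exists_neg_traffic_solution_of_isolated hα hμ hP hPsub hC.nonempty hF hD
    exact ⟨lam, traffic_eq_iff.mpr hlam, hi⟩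
  refine ⟨fun ⟨C, hC, hF, hD⟩ => hneg C hC hF hD, fun hNI lam hlam =>
    nonneg_of_traffic_solution_of_NI hα hμ hP hPsub hNI (traffic_eq_iff.mp hlam), fun h C hC => ?_⟩
  by_contra hiso
  obtain ⟨lam, hlam, i, hi⟩ := hneg C hC (not_or.mp hiso).1 (not_or.mp hiso).2
  exact (h lam hlam i).not_gt hi
end

section
/- Let P be a substochastic matrix and let C be a communicating class of P. Under the NI hypothesis on (α, μ, P), if C is a class that cannot be filled, then every solution λ of the traffic equation λ = α + (λ ∧ μ)P satisfies λ_i = 0 for all i ∈ C, and if C can be filled then λ_i > 0 for all i ∈ C. -/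
open scoped Classical

namespace TA
variable {n : ℕ}

theorem pow_entry_nonneg (P : Matrix (Fin n) (Fin n) ℝ) (hP : ∀ i j, 0 ≤ P i j) :
    ∀ (k : ℕ) (i j : Fin n), 0 ≤ (P ^ k) i j := by
  intro k
  induction k with
  | zero =>
    intro i j
    simp only [pow_zero, Matrix.one_apply]
    split <;> norm_num
  | succ k ih =>
    intro i j
    rw [pow_succ, Matrix.mul_apply]
    exact Finset.sum_nonneg fun t _ => mul_nonneg (ih i t) (hP t j)

theorem access_trans (P : Matrix (Fin n) (Fin n) ℝ) (hP : ∀ i j, 0 ≤ P i j)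
    {k l : ℕ} {i j m : Fin n}
    (h1 : 0 < (P ^ k) i j) (h2 : 0 < (P ^ l) j m) : 0 < (P ^ (k + l)) i m := by
  rw [pow_add, Matrix.mul_apply]
  refine Finset.sum_pos' (fun t _ => mul_nonneg (pow_entry_nonneg P hP k i t)
    (pow_entry_nonneg P hP l t m)) ⟨j, Finset.mem_univ j, mul_pos h1 h2⟩

theorem step_decomp (P : Matrix (Fin n) (Fin n) ℝ) (hP : ∀ i j, 0 ≤ P i j)
    {k : ℕ} {i j : Fin n}
    (h : 0 < (P ^ (k + 1)) i j) : ∃ t, 0 < P i t ∧ 0 < (P ^ k) t j := by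
  rw [pow_succ', Matrix.mul_apply] at h
  by_contra hc
  push_neg at hc
  have hz : ∀ t ∈ Finset.univ, P i t * (P ^ k) t j = 0 := by
    intro t _
    rcases (hP i t).lt_or_eq with h1 | h1
    · have h2 := le_antisymm (hc t h1) (pow_entry_nonneg P hP k t j)
      rw [h2, mul_zero]
    · rw [← h1, zero_mul]
  rw [Finset.sum_eq_zero hz] at h
  exact lt_irrefl 0 h

theorem access_trans' (P : Matrix (Fin n) (Fin n) ℝ) (hP : ∀ i j, 0 ≤ P i j)
    {i j m : Fin n}
    (h1 : ∃ k, 0 < (P ^ (k + 1)) i j) (h2 : ∃ k, 0 < (P ^ (k + 1)) j m) :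
    ∃ k, 0 < (P ^ (k + 1)) i m := by
  obtain ⟨k1, h1⟩ := h1; obtain ⟨k2, h2⟩ := h2
  refine ⟨k1 + k2 + 1, ?_⟩
  have h := access_trans P hP h1 h2
  rwa [show (k1 + 1) + (k2 + 1) = (k1 + k2 + 1) + 1 by ring] at h

theorem accessEq_trans (P : Matrix (Fin n) (Fin n) ℝ) (hP : ∀ i j, 0 ≤ P i j)
    {i j m : Fin n}
    (h1 : i = j ∨ ∃ k, 0 < (P ^ (k + 1)) i j)
    (h2 : j = m ∨ ∃ k, 0 < (P ^ (k + 1)) j m) :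
    i = m ∨ ∃ k, 0 < (P ^ (k + 1)) i m := by
  rcases h1 with rfl | h1
  · exact h2
  · rcases h2 with rfl | h2
    · exact Or.inr h1
    · exact Or.inr (access_trans' P hP h1 h2)

theorem closed_pow (P : Matrix (Fin n) (Fin n) ℝ) (hP : ∀ i j, 0 ≤ P i j)
    (S : Finset (Fin n)) (hcl : ∀ i ∈ S, ∀ j, 0 < P i j → j ∈ S) :
    ∀ (k : ℕ) {i j : Fin n}, i ∈ S → 0 < (P ^ (k + 1)) i j → j ∈ S := by
  intro k
  induction k with
  | zero =>
    intro i j hi h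
    rw [zero_add, pow_one] at h
    exact hcl i hi j h
  | succ k ih =>
    intro i j hi h
    obtain ⟨t, h1, h2⟩ := step_decomp P hP h
    exact ih (hcl i hi t h1) h2

theorem access_iff (P : Matrix (Fin n) (Fin n) ℝ) {a j : Fin n} :
    (∃ k ≥ 1, 0 < (P ^ k) a j) ↔ (∃ m, 0 < (P ^ (m + 1)) a j) := by
  constructor
  · rintro ⟨k, hk, h⟩
    exact ⟨k - 1, by rwa [Nat.sub_add_cancel hk]⟩
  · rintro ⟨m, h⟩
    exact ⟨m + 1, Nat.le_add_left 1 m, h⟩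



theorem exists_closed_class (P : Matrix (Fin n) (Fin n) ℝ) (hP : ∀ i j, 0 ≤ P i j)
    (S : Finset (Fin n)) (hne : S.Nonempty)
    (hcl : ∀ i ∈ S, ∀ j, 0 < P i j → j ∈ S)
    (hstoch : ∀ i ∈ S, ∑ j, P i j = 1) :
    ∃ C : Set (Fin n), IsCommClass P C ∧ (∀ j ∈ C, j ∈ S) ∧ ¬ CanBeDrained P C := by
  set T : Fin n → Finset (Fin n) :=
    fun a => Finset.univ.filter (fun j => a = j ∨ ∃ m, 0 < (P ^ (m + 1)) a j) with hT
  have memT : ∀ a j, j ∈ T a ↔ (a = j ∨ ∃ m, 0 < (P ^ (m + 1)) a j) := by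
    intro a j; simp [hT]
  have TsubS : ∀ a ∈ S, ∀ j ∈ T a, j ∈ S := by
    intro a ha j hj
    rcases (memT a j).1 hj with rfl | ⟨m, hm⟩
    · exact ha
    · exact closed_pow P hP S hcl m ha hm
  have Tmono : ∀ a b, b ∈ T a → T b ⊆ T a := by
    intro a b hb c hc
    exact (memT a c).2 (accessEq_trans P hP ((memT a b).1 hb) ((memT b c).1 hc))
  obtain ⟨k, hkS, hkmin⟩ := Finset.exists_min_image S (fun a => (T a).card) hne
  have hself : ∀ a, a ∈ T a := fun a => (memT a a).2 (Or.inl rfl)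
  have hTj : ∀ j ∈ T k, T j = T k := by
    intro j hj
    exact Finset.eq_of_subset_of_card_le (Tmono k j hj) (hkmin j (TsubS k hkS j hj))
  have hback : ∀ j ∈ T k, k ∈ T j := by
    intro j hj; rw [hTj j hj]; exact hself k
  refine ⟨{j | Communicates P k j}, ⟨k, rfl⟩, ?_, ?_⟩
  all_goals
    have CiffT : ∀ j, j ∈ {j | Communicates P k j} ↔ j ∈ T k := by
      intro j
      constructor
      · rintro (rfl | ⟨h1, _⟩)
        · exact hself _
        · exact (memT k j).2 (Or.inr ((access_iff P).1 h1))
      · intro hj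
        rcases (memT k j).1 hj with rfl | ⟨m, hm⟩
        · exact Or.inl rfl
        · rcases (memT j k).1 (hback j hj) with rfl | ⟨m', hm'⟩
          · exact Or.inl rfl
          · exact Or.inr ⟨(access_iff P).2 ⟨m, hm⟩, (access_iff P).2 ⟨m', hm'⟩⟩
  · intro j hj
    exact TsubS k hkS j ((CiffT j).1 hj)
  · rintro (⟨i, hiC, hrow⟩ | ⟨i, hiC, j, hjC, hPij⟩)
    · exact absurd (hstoch i (TsubS k hkS i ((CiffT i).1 hiC))) (by linarith)
    · apply hjC
      apply (CiffT j).2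
      rcases (memT k i).1 ((CiffT i).1 hiC) with rfl | ⟨m, hm⟩
      · exact (memT k j).2 (Or.inr ⟨0, by rwa [zero_add, pow_one]⟩)
      · refine (memT k j).2 (Or.inr ⟨m + 1, ?_⟩)
        have h := access_trans P hP hm (by rwa [pow_one] : 0 < (P ^ 1) i j)
        rwa [show (m + 1) + 1 = (m + 1) + 1 from rfl] at h

end TA
namespace TA
variable {n : ℕ}

theorem lam_nonneg (α μ : Fin n → ℝ) (P : Matrix (Fin n) (Fin n) ℝ)
    (hα : ∀ i, 0 ≤ α i) (hμ : ∀ i, 0 < μ i)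
    (hP : ∀ i j, 0 ≤ P i j) (hPsub : ∀ i, ∑ j, P i j ≤ 1)
    (hNI : NI α P) (lam : Fin n → ℝ)
    (heq : ∀ i, lam i = α i + ∑ j, min (lam j) (μ j) * P j i) :
    ∀ i, 0 ≤ lam i := by
  by_contra hcon
  push_neg at hcon
  set ν : Fin n → ℝ := fun j => min (lam j) (μ j) with hν
  set x : Fin n → ℝ := fun j => max (-(lam j)) 0 with hx
  set S : Finset (Fin n) := Finset.univ.filter (fun j => lam j < 0) with hS
  obtain ⟨i0, hi0⟩ := hcon
  have hmemS : ∀ j, j ∈ S ↔ lam j < 0 := fun j => by simp [hS]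
  have hSne : S.Nonempty := ⟨i0, (hmemS i0).2 hi0⟩
  have hxnn : ∀ j, 0 ≤ x j := fun j => le_max_right _ _
  have hxS : ∀ j, j ∈ S → x j = -(lam j) := fun j hj =>
    max_eq_left (by have := (hmemS j).1 hj; linarith)
  have hxnS : ∀ j, j ∉ S → x j = 0 := fun j hj =>
    max_eq_right (by have := not_lt.1 (fun h => hj ((hmemS j).2 h)); linarith)
  have hνS : ∀ j, j ∈ S → ν j = lam j := fun j hj =>
    min_eq_left (le_of_lt (lt_trans ((hmemS j).1 hj) (hμ j)))
  have hνnS : ∀ j, j ∉ S → 0 ≤ ν j := fun j hj =>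
    le_min (not_lt.1 (fun h => hj ((hmemS j).2 h))) (hμ j).le
  have hνx : ∀ j, -(ν j) ≤ x j := by
    intro j
    by_cases hj : j ∈ S
    · rw [hνS j hj, hxS j hj]
    · have h1 := hνnS j hj
      have h2 := hxnn j
      linarith
  -- pointwise subinvariance
  have c1 : ∀ i, x i ≤ ∑ j, x j * P j i := by
    intro i
    by_cases h : i ∈ S
    · rw [hxS i h, heq i]
      have h1 : ∀ j, -(ν j) * P j i ≤ x j * P j i :=
        fun j => mul_le_mul_of_nonneg_right (hνx j) (hP j i)
      have h2 : ∑ j, -(ν j) * P j i ≤ ∑ j, x j * P j i :=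
        Finset.sum_le_sum fun j _ => h1 j
      have h3 : ∑ j, -(ν j) * P j i = -∑ j, ν j * P j i := by
        rw [← Finset.sum_neg_distrib]
        simp [neg_mul]
      have h4 := hα i
      rw [h3] at h2
      linarith
    · rw [hxnS i h]
      exact Finset.sum_nonneg fun j _ => mul_nonneg (hxnn j) (hP j i)
  have c3 : ∑ i, ∑ j, x j * P j i = ∑ j, x j * ∑ i, P j i := by
    rw [Finset.sum_comm]
    exact Finset.sum_congr rfl fun j _ => (Finset.mul_sum _ _ _).symm
  have c4 : ∑ j, x j * ∑ i, P j i ≤ ∑ j, x j :=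
    Finset.sum_le_sum fun j _ => by
      calc x j * ∑ i, P j i ≤ x j * 1 := mul_le_mul_of_nonneg_left (hPsub j) (hxnn j)
      _ = x j := mul_one _
  have ceq : ∑ i, x i = ∑ i, ∑ j, x j * P j i := by
    have h1 : ∑ i, x i ≤ ∑ i, ∑ j, x j * P j i := Finset.sum_le_sum fun i _ => c1 i
    have h2 : ∑ i, ∑ j, x j * P j i ≤ ∑ i, x i := by rw [c3]; exact c4
    linarith
  have hpt : ∀ i, x i = ∑ j, x j * P j i := by
    have := (Finset.sum_eq_sum_iff_of_le (fun i _ => c1 i)).1 ceq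
    exact fun i => this i (Finset.mem_univ i)
  -- restriction to S : rows of S are stochastic and S is closed
  have hxPS : ∀ i, ∑ j, x j * P j i = ∑ j ∈ S, x j * P j i := by
    intro i
    symm
    apply Finset.sum_subset (Finset.subset_univ S)
    intro j _ hj
    rw [hxnS j hj, zero_mul]
  have hsum2 : ∑ i ∈ S, x i = ∑ j ∈ S, x j * ∑ i ∈ S, P j i := by
    calc ∑ i ∈ S, x i = ∑ i ∈ S, ∑ j ∈ S, x j * P j i :=
          Finset.sum_congr rfl fun i _ => by rw [hpt i, hxPS i]
    _ = ∑ j ∈ S, x j * ∑ i ∈ S, P j i := by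
          rw [Finset.sum_comm]
          exact Finset.sum_congr rfl fun j _ => (Finset.mul_sum _ _ _).symm
  have hrowS : ∀ j ∈ S, ∑ i ∈ S, P j i = 1 := by
    have hle : ∀ j ∈ S, x j * ∑ i ∈ S, P j i ≤ x j := by
      intro j _
      have hr : ∑ i ∈ S, P j i ≤ 1 :=
        le_trans (Finset.sum_le_sum_of_subset_of_nonneg (Finset.subset_univ S)
          (fun i _ _ => hP j i)) (hPsub j)
      calc x j * ∑ i ∈ S, P j i ≤ x j * 1 := mul_le_mul_of_nonneg_left hr (hxnn j)
      _ = x j := mul_one _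
    have heqs : ∑ j ∈ S, x j * ∑ i ∈ S, P j i = ∑ j ∈ S, x j := hsum2.symm
    have hpt2 := (Finset.sum_eq_sum_iff_of_le hle).1 heqs
    intro j hj
    have hxpos : 0 < x j := by
      rw [hxS j hj]; have := (hmemS j).1 hj; linarith
    have h5 : x j * (∑ i ∈ S, P j i) = x j * 1 := by rw [mul_one]; exact hpt2 j hj
    exact mul_left_cancel₀ (ne_of_gt hxpos) h5
  have hclosed : ∀ j ∈ S, ∀ i, 0 < P j i → i ∈ S := by
    intro j hj i hpos
    by_contra hiS
    have h1 : ∑ i ∈ Finset.univ \ S, P j i ≤ 0 := by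
      have := Finset.sum_sdiff (Finset.subset_univ S) (f := fun i => P j i)
      have h2 := hPsub j
      have h3 := hrowS j hj
      linarith
    have h4 : P j i ≤ ∑ i ∈ Finset.univ \ S, P j i :=
      Finset.single_le_sum (fun t _ => hP j t)
        (Finset.mem_sdiff.2 ⟨Finset.mem_univ i, hiS⟩)
    linarith
  have hstochS : ∀ j ∈ S, ∑ i, P j i = 1 := by
    intro j hj
    refine le_antisymm (hPsub j) ?_
    rw [← hrowS j hj]
    exact Finset.sum_le_sum_of_subset_of_nonneg (Finset.subset_univ S)
      (fun i _ _ => hP j i)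
  -- α vanishes on S and no inflow from outside S
  have hkey : ∀ j ∈ S, α j = 0 ∧ ∀ k, k ∉ S → ν k * P k j = 0 := by
    intro j hj
    have h0 : lam j = -(x j) := by rw [hxS j hj]; ring
    have h1 : α j + ∑ k, (ν k + x k) * P k j = 0 := by
      have h2 := heq j
      have h3 := hpt j
      have h4 : ∑ k, (ν k + x k) * P k j = ∑ k, ν k * P k j + ∑ k, x k * P k j := by
        rw [← Finset.sum_add_distrib]
        exact Finset.sum_congr rfl fun k _ => by ring
      rw [h4]
      rw [h0] at h2
      linarith
    have hterm : ∀ k, 0 ≤ (ν k + x k) * P k j := by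
      intro k
      apply mul_nonneg _ (hP k j)
      by_cases hk : k ∈ S
      · rw [hνS k hk, hxS k hk]; linarith
      · have := hνnS k hk; have := hxnn k; linarith
    have hsnn : 0 ≤ ∑ k, (ν k + x k) * P k j := Finset.sum_nonneg fun k _ => hterm k
    have hα0 : α j = 0 := le_antisymm (by linarith [hα j]) (hα j)
    refine ⟨hα0, fun k hk => ?_⟩
    have hsz : ∑ k, (ν k + x k) * P k j = 0 := by linarith
    have := (Finset.sum_eq_zero_iff_of_nonneg (fun k _ => hterm k)).1 hsz k (Finset.mem_univ k)
    rw [hxnS k hk, add_zero] at this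
    exact this
  -- extract an undrainable class inside S
  obtain ⟨C', hCC', hC'S, hnd⟩ := exists_closed_class P hP S hSne hclosed hstochS
  rcases hNI C' hCC' with hf | hd
  swap
  · exact hnd hd
  -- fillable ⇒ contradiction
  have hlam_out : ∀ t, t ∉ S → lam t = α t + ∑ k, ν k * P k t := fun t _ => heq t
  have hterm_out : ∀ t, t ∉ S → ∀ k, 0 ≤ ν k * P k t := by
    intro t ht k
    by_cases hk : k ∈ S
    · have : P k t = 0 := by
        by_contra hne
        have := lt_of_le_of_ne (hP k t) (Ne.symm hne)
        exact ht (hclosed k hk t this)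
      rw [this, mul_zero]
    · exact mul_nonneg (hνnS k hk) (hP k t)
  have hge_out : ∀ t, t ∉ S → α t ≤ lam t := by
    intro t ht
    rw [heq t]
    have := Finset.sum_nonneg fun k (_ : k ∈ Finset.univ) => hterm_out t ht k
    linarith
  have cross : ∀ m : ℕ, ∀ j, j ∉ S → 0 < lam j → ∀ l ∈ S, ¬(0 < (P ^ (m + 1)) j l) := by
    intro m
    induction m with
    | zero =>
      intro j hj hlj l hl hpos
      rw [zero_add, pow_one] at hpos
      have hνj : 0 < ν j := lt_min hlj (hμ j)
      have := (hkey l hl).2 j hj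
      nlinarith
    | succ m ih =>
      intro j hj hlj l hl hpos
      obtain ⟨t, h1, h2⟩ := step_decomp P hP hpos
      have hνj : 0 < ν j := lt_min hlj (hμ j)
      by_cases ht : t ∈ S
      · have := (hkey t ht).2 j hj
        nlinarith
      · have hlt : 0 < lam t := by
          rw [heq t]
          have hs : ν j * P j t ≤ ∑ k, ν k * P k t :=
            Finset.single_le_sum (fun k _ => hterm_out t ht k) (Finset.mem_univ j)
          have := mul_pos hνj h1
          have := hα t
          linarith
        exact ih t ht hlt l hl h2
  rcases hf with ⟨l, hlC, hαl⟩ | ⟨j, hαj, l, hlC, k, hk1, hkpos⟩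
  · have := (hkey l (hC'S l hlC)).1
    linarith
  · have hlS := hC'S l hlC
    have hjS : j ∉ S := by
      intro hjS
      have := (hkey j hjS).1
      linarith
    have hljam : 0 < lam j := lt_of_lt_of_le hαj (hge_out j hjS)
    have hpos' : 0 < (P ^ ((k - 1) + 1)) j l := by rwa [Nat.sub_add_cancel hk1]
    exact cross (k - 1) j hjS hljam l hlS hpos'

end TA
namespace TA
variable {n : ℕ}

theorem lam_prop (α μ : Fin n → ℝ) (P : Matrix (Fin n) (Fin n) ℝ)
    (hα : ∀ i, 0 ≤ α i) (hμ : ∀ i, 0 < μ i)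
    (hP : ∀ i j, 0 ≤ P i j) (lam : Fin n → ℝ)
    (heq : ∀ i, lam i = α i + ∑ j, min (lam j) (μ j) * P j i)
    (hnn : ∀ i, 0 ≤ lam i) :
    ∀ (k : ℕ) (j l : Fin n), 0 < lam j → 0 < (P ^ (k + 1)) j l → 0 < lam l := by
  have hstep : ∀ j l, 0 < lam j → 0 < P j l → 0 < lam l := by
    intro j l hj hpos
    rw [heq l]
    have hterm : ∀ m, 0 ≤ min (lam m) (μ m) * P m l :=
      fun m => mul_nonneg (le_min (hnn m) (hμ m).le) (hP m l)
    have hs : min (lam j) (μ j) * P j l ≤ ∑ m, min (lam m) (μ m) * P m l :=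
      Finset.single_le_sum (fun m _ => hterm m) (Finset.mem_univ j)
    have hp : 0 < min (lam j) (μ j) * P j l := mul_pos (lt_min hj (hμ j)) hpos
    have := hα l
    linarith
  intro k
  induction k with
  | zero =>
    intro j l hj hpos
    rw [zero_add, pow_one] at hpos
    exact hstep j l hj hpos
  | succ k ih =>
    intro j l hj hpos
    obtain ⟨t, h1, h2⟩ := step_decomp P hP hpos
    exact ih t l (hstep j t hj h1) h2

end TA

/-- under NI, any solution of the traffic equation vanishes on
every class that cannot be filled and is strictly positive on every class
that can be filled. -/
theorem solution_zero_on_unfilled_positive_on_filled (n : ℕ)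
    (α μ : Fin n → ℝ) (P : Matrix (Fin n) (Fin n) ℝ)
    (hα : ∀ i, 0 ≤ α i) (hμ : ∀ i, 0 < μ i)
    (hP : ∀ i j, 0 ≤ P i j) (hPsub : ∀ i, ∑ j, P i j ≤ 1)
    (hNI : NI α P)
    (lam : Fin n → ℝ)
    (heq : ∀ i, lam i = α i + ∑ j, min (lam j) (μ j) * P j i)
    (C : Set (Fin n)) (hC : IsCommClass P C) :
    (¬ CanBeFilled α P C → ∀ i ∈ C, lam i = 0) ∧
    (CanBeFilled α P C → ∀ i ∈ C, 0 < lam i) := by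
  have hnn := TA.lam_nonneg α μ P hα hμ hP hPsub hNI lam heq
  have hprop := TA.lam_prop α μ P hα hμ hP lam heq hnn
  have hνnn : ∀ k, 0 ≤ min (lam k) (μ k) := fun k => le_min (hnn k) (hμ k).le
  have hge : ∀ t, α t ≤ lam t := by
    intro t
    rw [heq t]
    have := Finset.sum_nonneg fun k (_ : k ∈ Finset.univ) =>
      mul_nonneg (hνnn k) (hP k t)
    linarith
  obtain ⟨i0, hCdef⟩ := hC
  have hcomm : ∀ a b, a ∈ C → b ∈ C → (a = b ∨ ∃ m, 0 < (P ^ (m + 1)) a b) := by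
    intro a b ha hb
    rw [hCdef] at ha hb
    have h1 : a = i0 ∨ ∃ m, 0 < (P ^ (m + 1)) a i0 := by
      rcases ha with rfl | ⟨_, h2⟩
      · exact Or.inl rfl
      · exact Or.inr ((TA.access_iff P).1 h2)
    have h2 : i0 = b ∨ ∃ m, 0 < (P ^ (m + 1)) i0 b := by
      rcases hb with rfl | ⟨h3, _⟩
      · exact Or.inl rfl
      · exact Or.inr ((TA.access_iff P).1 h3)
    exact TA.accessEq_trans P hP h1 h2
  have hposC : ∀ a b, a ∈ C → b ∈ C → 0 < lam a → 0 < lam b := by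
    intro a b ha hb hla
    rcases hcomm a b ha hb with rfl | ⟨m, hm⟩
    · exact hla
    · exact hprop m a b hla hm
  constructor
  · -- cannot be filled → lam vanishes on C
    intro hnf i hiC
    by_contra hne0
    have hipos : 0 < lam i := lt_of_le_of_ne (hnn i) (Ne.symm hne0)
    set B : Finset (Fin n) :=
      Finset.univ.filter (fun j => j = i ∨ ∃ m, 0 < (P ^ (m + 1)) j i) with hB
    have memB : ∀ j, j ∈ B ↔ (j = i ∨ ∃ m, 0 < (P ^ (m + 1)) j i) :=
      fun j => by simp [hB]
    have hiB : i ∈ B := (memB i).2 (Or.inl rfl)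
    have hαB : ∀ j ∈ B, α j = 0 := by
      intro j hj
      by_contra hne
      have hpos : 0 < α j := lt_of_le_of_ne (hα j) (Ne.symm hne)
      apply hnf
      rcases (memB j).1 hj with rfl | ⟨m, hm⟩
      · exact Or.inl ⟨j, hiC, hpos⟩
      · exact Or.inr ⟨j, hpos, i, hiC, m + 1, Nat.le_add_left 1 m, hm⟩
    have hBbackPow : ∀ (m : ℕ) (k j : Fin n), j ∈ B → 0 < (P ^ (m + 1)) k j → k ∈ B := by
      intro m k j hj hkj
      exact (memB k).2 (TA.accessEq_trans P hP (Or.inr ⟨m, hkj⟩) ((memB j).1 hj))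
    have hBback : ∀ (k j : Fin n), j ∈ B → 0 < P k j → k ∈ B := by
      intro k j hj hkj
      exact hBbackPow 0 k j hj (by rwa [zero_add, pow_one])
    set ν : Fin n → ℝ := fun k => min (lam k) (μ k) with hνdef
    have hflow : ∀ j ∈ B, lam j = ∑ k ∈ B, ν k * P k j := by
      intro j hj
      have hsub : ∑ k ∈ B, ν k * P k j = ∑ k, ν k * P k j := by
        apply Finset.sum_subset (Finset.subset_univ B)
        intro k _ hk
        have h0 : P k j = 0 :=
          le_antisymm (not_lt.1 fun h => hk (hBback k j hj h)) (hP k j)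
        rw [h0, mul_zero]
      rw [heq j, hαB j hj, zero_add, ← hsub]
    have hr1 : ∀ k, ∑ j ∈ B, P k j ≤ 1 := fun k =>
      le_trans (Finset.sum_le_sum_of_subset_of_nonneg (Finset.subset_univ B)
        fun j _ _ => hP k j) (hPsub k)
    have e1 : ∑ j ∈ B, lam j = ∑ k ∈ B, ν k * ∑ j ∈ B, P k j := by
      calc ∑ j ∈ B, lam j = ∑ j ∈ B, ∑ k ∈ B, ν k * P k j :=
            Finset.sum_congr rfl hflow
      _ = ∑ k ∈ B, ν k * ∑ j ∈ B, P k j := by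
            rw [Finset.sum_comm]
            exact Finset.sum_congr rfl fun k _ => (Finset.mul_sum _ _ _).symm
    have hb1 : ∀ k ∈ B, ν k * ∑ j ∈ B, P k j ≤ ν k := by
      intro k _
      calc ν k * ∑ j ∈ B, P k j ≤ ν k * 1 :=
            mul_le_mul_of_nonneg_left (hr1 k) (hνnn k)
      _ = ν k := mul_one _
    have hb2 : ∀ k ∈ B, ν k ≤ lam k := fun k _ => min_le_left _ _
    have E1 : ∑ k ∈ B, ν k * ∑ j ∈ B, P k j = ∑ k ∈ B, ν k := by
      have h1 : ∑ k ∈ B, ν k * ∑ j ∈ B, P k j ≤ ∑ k ∈ B, ν k := Finset.sum_le_sum hb1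
      have h2 : ∑ k ∈ B, ν k ≤ ∑ k ∈ B, lam k := Finset.sum_le_sum hb2
      linarith [e1]
    have E2 : ∑ k ∈ B, ν k = ∑ k ∈ B, lam k := by
      have h2 : ∑ k ∈ B, ν k ≤ ∑ k ∈ B, lam k := Finset.sum_le_sum hb2
      linarith [e1, E1]
    have pt1 := (Finset.sum_eq_sum_iff_of_le hb1).1 E1
    have pt2 := (Finset.sum_eq_sum_iff_of_le hb2).1 E2
    set Bp : Finset (Fin n) := B.filter (fun k => 0 < lam k) with hBp
    have memBp : ∀ k, k ∈ Bp ↔ k ∈ B ∧ 0 < lam k := fun k => by simp [hBp]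
    have hBpne : Bp.Nonempty := ⟨i, (memBp i).2 ⟨hiB, hipos⟩⟩
    have hrowBp : ∀ k ∈ Bp, ∑ j ∈ B, P k j = 1 := by
      intro k hk
      obtain ⟨hkB, hkpos⟩ := (memBp k).1 hk
      have hνk : ν k = lam k := pt2 k hkB
      have hνpos : 0 < ν k := by rw [hνk]; exact hkpos
      have h5 : ν k * (∑ j ∈ B, P k j) = ν k * 1 := by rw [mul_one]; exact pt1 k hkB
      exact mul_left_cancel₀ (ne_of_gt hνpos) h5
    have hclBp : ∀ k ∈ Bp, ∀ j, 0 < P k j → j ∈ Bp := by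
      intro k hk j hpos
      obtain ⟨hkB, hkpos⟩ := (memBp k).1 hk
      have hjB : j ∈ B := by
        by_contra hjB
        have h1 : ∑ j ∈ Finset.univ \ B, P k j ≤ 0 := by
          have := Finset.sum_sdiff (Finset.subset_univ B) (f := fun j => P k j)
          have h2 := hPsub k
          have h3 := hrowBp k hk
          linarith
        have h4 : P k j ≤ ∑ j ∈ Finset.univ \ B, P k j :=
          Finset.single_le_sum (fun t _ => hP k t)
            (Finset.mem_sdiff.2 ⟨Finset.mem_univ j, hjB⟩)
        linarith
      refine (memBp j).2 ⟨hjB, ?_⟩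
      rw [hflow j hjB]
      have hterm : ∀ m ∈ B, 0 ≤ ν m * P m j := fun m _ => mul_nonneg (hνnn m) (hP m j)
      have hs : ν k * P k j ≤ ∑ m ∈ B, ν m * P m j := Finset.single_le_sum hterm hkB
      have hνpos : 0 < ν k := lt_min hkpos (hμ k)
      nlinarith [mul_pos hνpos hpos]
    have hstBp : ∀ k ∈ Bp, ∑ j, P k j = 1 := by
      intro k hk
      refine le_antisymm (hPsub k) ?_
      rw [← hrowBp k hk]
      exact Finset.sum_le_sum_of_subset_of_nonneg (Finset.subset_univ B)
        fun j _ _ => hP k j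
    obtain ⟨C', hCC', hC'Bp, hnd⟩ := TA.exists_closed_class P hP Bp hBpne hclBp hstBp
    rcases hNI C' hCC' with hf | hd
    · rcases hf with ⟨l, hlC', hαl⟩ | ⟨j, hαj, l, hlC', k, hk1, hkpos⟩
      · have hlB := ((memBp l).1 (hC'Bp l hlC')).1
        have := hαB l hlB
        linarith
      · have hlB := ((memBp l).1 (hC'Bp l hlC')).1
        have hjB : j ∈ B := hBbackPow (k - 1) j l hlB (by rwa [Nat.sub_add_cancel hk1])
        have := hαB j hjB
        linarith
    · exact hnd hd
  · -- can be filled → lam positive on C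
    intro hf i hiC
    rcases hf with ⟨l, hlC, hαl⟩ | ⟨j, hαj, l, hlC, k, hk1, hkpos⟩
    · exact hposC l i hlC hiC (lt_of_lt_of_le hαl (hge l))
    · have hjpos : 0 < lam j := lt_of_lt_of_le hαj (hge j)
      have hlpos : 0 < lam l :=
        hprop (k - 1) j l hjpos (by rwa [Nat.sub_add_cancel hk1])
      exact hposC l i hlC hiC hlpos
end

section
/- Suppose the overflow network (α, μ, P, Q) satisfies: (α, μ, P) is non-isolated, and for every subset A of the set of nodes that are stable under the non-overflow solution λ* (i.e., A ⊆ {i : λ*_i < μ_i}), the spectral radius of P_A + Q_{N∖A} is strictly less than 1. Then the overflow traffic equation λ = α + (λ ∧ μ)P + (λ − μ)⁺Q has at most one solution. -/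
open scoped Classical

/-- `P` with all rows outside `A` zeroed out (the matrix `P_A`). -/
noncomputable def rowRestrict {n : ℕ} (P : Matrix (Fin n) (Fin n) ℝ) (A : Set (Fin n)) :
    Matrix (Fin n) (Fin n) ℝ :=
  fun i j => if i ∈ A then P i j else 0

/-- The spectral radius of a real matrix is `< 1`: all complex eigenvalues
have absolute value `< 1`. -/
def SpecLtOne {n : ℕ} (M : Matrix (Fin n) (Fin n) ℝ) : Prop :=
  ∀ z ∈ spectrum ℂ (M.map (Complex.ofReal)), ‖z‖ < 1

namespace OverflowAux


lemma pow_entry_nonneg {n : ℕ} (P : Matrix (Fin n) (Fin n) ℝ) (hP : ∀ i j, 0 ≤ P i j) :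
    ∀ (k : ℕ) (i j : Fin n), 0 ≤ (P ^ k) i j := by
  intro k
  induction k with
  | zero => intro i j; rw [pow_zero, Matrix.one_apply]; split <;> norm_num
  | succ k ih =>
    intro i j
    rw [pow_succ, Matrix.mul_apply]
    exact Finset.sum_nonneg fun c _ => mul_nonneg (ih i c) (hP c j)

lemma pow_succ_pos_decomp {n : ℕ} (P : Matrix (Fin n) (Fin n) ℝ) (hP : ∀ i j, 0 ≤ P i j)
    {k : ℕ} {i j : Fin n} (h : 0 < (P ^ (k + 1)) i j) :
    ∃ c, 0 < (P ^ k) i c ∧ 0 < P c j := by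
  rw [pow_succ, Matrix.mul_apply] at h
  obtain ⟨c, _, hc⟩ := Finset.exists_lt_of_sum_lt (by simpa using h :
    ∑ c : Fin n, (0:ℝ) < ∑ c, (P ^ k) i c * P c j)
  have h1 : 0 ≤ (P ^ k) i c := pow_entry_nonneg P hP k i c
  have h2 : 0 ≤ P c j := hP c j
  refine ⟨c, h1.lt_of_ne fun he => ?_, h2.lt_of_ne fun he => ?_⟩
  · rw [← he, zero_mul] at hc; exact lt_irrefl 0 hc
  · rw [← he, mul_zero] at hc; exact lt_irrefl 0 hc

lemma pow_pos_trans {n : ℕ} (P : Matrix (Fin n) (Fin n) ℝ) (hP : ∀ i j, 0 ≤ P i j)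
    {k l : ℕ} {i m j : Fin n} (h1 : 0 < (P ^ k) i m) (h2 : 0 < (P ^ l) m j) :
    0 < (P ^ (k + l)) i j := by
  rw [pow_add, Matrix.mul_apply]
  have hterm : 0 < (P ^ k) i m * (P ^ l) m j := mul_pos h1 h2
  calc (0:ℝ) < (P ^ k) i m * (P ^ l) m j := hterm
    _ ≤ ∑ c, (P ^ k) i c * (P ^ l) c j :=
      Finset.single_le_sum (fun c _ => mul_nonneg (pow_entry_nonneg P hP k i c)
        (pow_entry_nonneg P hP l c j)) (Finset.mem_univ m)

lemma sum_trick {n : ℕ} (P Q : Matrix (Fin n) (Fin n) ℝ)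
    (hP : ∀ i j, 0 ≤ P i j) (hPsub : ∀ i, ∑ j, P i j ≤ 1)
    (hQ : ∀ i j, 0 ≤ Q i j) (hQsub : ∀ i, ∑ j, Q i j ≤ 1)
    (u v : Fin n → ℝ) (hu : ∀ j, 0 ≤ u j) (hv : ∀ j, 0 ≤ v j)
    (hle : ∀ i, u i + v i ≤ (∑ j, u j * P j i) + (∑ j, v j * Q j i)) :
    (∀ i, u i + v i = (∑ j, u j * P j i) + (∑ j, v j * Q j i)) ∧
      (∀ j, 0 < u j → ∑ i, P j i = 1) ∧ (∀ j, 0 < v j → ∑ i, Q j i = 1) := by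
  have key : ∑ i, ((∑ j, u j * P j i) + (∑ j, v j * Q j i) - (u i + v i))
      = ∑ j, (u j * (∑ i, P j i - 1) + v j * (∑ i, Q j i - 1)) := by
    have c1 : ∑ i, ∑ j, u j * P j i = ∑ j, ∑ i, u j * P j i := Finset.sum_comm
    have c2 : ∑ i, ∑ j, v j * Q j i = ∑ j, ∑ i, v j * Q j i := Finset.sum_comm
    simp only [Finset.sum_add_distrib, Finset.sum_sub_distrib, mul_sub, mul_one, Finset.mul_sum]
    rw [c1, c2]
    ring
  have h1 : (0:ℝ) ≤ ∑ i, ((∑ j, u j * P j i) + (∑ j, v j * Q j i) - (u i + v i)) :=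
    Finset.sum_nonneg fun i _ => by linarith [hle i]
  have h2 : ∑ j, (u j * (∑ i, P j i - 1) + v j * (∑ i, Q j i - 1)) ≤ 0 :=
    Finset.sum_nonpos fun j _ => add_nonpos
      (mul_nonpos_of_nonneg_of_nonpos (hu j) (by linarith [hPsub j]))
      (mul_nonpos_of_nonneg_of_nonpos (hv j) (by linarith [hQsub j]))
  have hT : ∑ i, ((∑ j, u j * P j i) + (∑ j, v j * Q j i) - (u i + v i)) = 0 :=
    le_antisymm (key ▸ h2) h1
  refine ⟨?_, ?_, ?_⟩
  · intro i
    have := (Finset.sum_eq_zero_iff_of_nonneg (fun i _ => by linarith [hle i] :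
      ∀ i ∈ Finset.univ, (0:ℝ) ≤ (∑ j, u j * P j i) + (∑ j, v j * Q j i) - (u i + v i))).mp hT
        i (Finset.mem_univ i)
    linarith
  all_goals {
    have hT2 : ∑ j, (u j * (∑ i, P j i - 1) + v j * (∑ i, Q j i - 1)) = 0 := by
      rw [← key]; exact hT
    have hterm := (Finset.sum_eq_zero_iff_of_nonpos (fun j _ => add_nonpos
      (mul_nonpos_of_nonneg_of_nonpos (hu j) (by linarith [hPsub j]))
      (mul_nonpos_of_nonneg_of_nonpos (hv j) (by linarith [hQsub j])))).mp hT2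
    intro j hj
    have := hterm j (Finset.mem_univ j)
    have hup : u j * (∑ i, P j i - 1) ≤ 0 :=
      mul_nonpos_of_nonneg_of_nonpos (hu j) (by linarith [hPsub j])
    have hvq : v j * (∑ i, Q j i - 1) ≤ 0 :=
      mul_nonpos_of_nonneg_of_nonpos (hv j) (by linarith [hQsub j])
    have h3 : u j * (∑ i, P j i - 1) = 0 ∧ v j * (∑ i, Q j i - 1) = 0 := by
      constructor <;> linarith
    first
    | { rcases mul_eq_zero.mp h3.1 with h | h
        · exact absurd h (ne_of_gt hj)
        · linarith }
    | { rcases mul_eq_zero.mp h3.2 with h | h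
        · exact absurd h (ne_of_gt hj)
        · linarith } }

lemma min_max_split (t m : ℝ) : min t m + max (t - m) 0 = t := by
  rcases le_total t m with h | h
  · rw [min_eq_left h, max_eq_right (by linarith)]; ring
  · rw [min_eq_right h, max_eq_left (by linarith)]; ring


attribute [local instance] Matrix.frobeniusNormedAddCommGroup Matrix.frobeniusNormedRing
  Matrix.frobeniusNormedAlgebra

lemma frob_entry_le {n : ℕ} (M : Matrix (Fin n) (Fin n) ℂ) (i j : Fin n) :
    ‖M i j‖ ≤ ‖M‖ := by
  rw [Matrix.frobenius_norm_def]
  have h1 : ‖M i j‖ ^ (2:ℝ) ≤ ∑ i', ∑ j', ‖M i' j'‖ ^ (2:ℝ) := by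
    calc ‖M i j‖ ^ (2:ℝ) ≤ ∑ j', ‖M i j'‖ ^ (2:ℝ) :=
          Finset.single_le_sum (fun _ _ => Real.rpow_nonneg (norm_nonneg _) _)
            (Finset.mem_univ j)
      _ ≤ ∑ i', ∑ j', ‖M i' j'‖ ^ (2:ℝ) :=
          Finset.single_le_sum (fun _ _ => Finset.sum_nonneg fun _ _ =>
            Real.rpow_nonneg (norm_nonneg _) _) (Finset.mem_univ i)
  calc ‖M i j‖ = (‖M i j‖ ^ (2:ℝ)) ^ ((1:ℝ)/2) := by
        rw [← Real.rpow_mul (norm_nonneg _)]; norm_num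
    _ ≤ (∑ i', ∑ j', ‖M i' j'‖ ^ (2:ℝ)) ^ ((1:ℝ)/2) := by
        apply Real.rpow_le_rpow (Real.rpow_nonneg (norm_nonneg _) _) h1; norm_num

/-- If a nonnegative matrix has a nonneg, nonzero right-subinvariant vector, SpecLtOne fails. -/
lemma specLtOne_no_subinvariant {n : ℕ} (N : Matrix (Fin n) (Fin n) ℝ)
    (hN : ∀ i j, 0 ≤ N i j) (hs : SpecLtOne N)
    (u : Fin n → ℝ) (hu : ∀ i, 0 ≤ u i) (hsub : ∀ i, u i ≤ N.mulVec u i) :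
    ∀ i, u i = 0 := by
  haveI : CompleteSpace (Matrix (Fin n) (Fin n) ℂ) := FiniteDimensional.complete ℂ _
  by_contra hne
  push_neg at hne
  obtain ⟨i0, hi0⟩ := hne
  have hu0 : 0 < u i0 := lt_of_le_of_ne (hu i0) (Ne.symm hi0)
  haveI : Nonempty (Fin n) := ⟨i0⟩
  -- powers nonneg
  have hNk : ∀ (k : ℕ) (i j : Fin n), 0 ≤ (N ^ k) i j := by
    intro k
    induction k with
    | zero => intro i j; rw [pow_zero, Matrix.one_apply]; split <;> norm_num
    | succ k ih =>
      intro i j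
      rw [pow_succ, Matrix.mul_apply]
      exact Finset.sum_nonneg fun c _ => mul_nonneg (ih i c) (hN c j)
  -- subinvariance of powers
  have hpow : ∀ (k : ℕ) (i : Fin n), u i ≤ (N ^ k).mulVec u i := by
    intro k
    induction k with
    | zero => intro i; simp [Matrix.mulVec, dotProduct, Matrix.one_apply]
    | succ k ih =>
      intro i
      have : (N ^ (k+1)).mulVec u = N.mulVec ((N ^ k).mulVec u) := by
        rw [pow_succ']
        rw [← Matrix.mulVec_mulVec]
      rw [this]
      calc u i ≤ N.mulVec u i := hsub i
        _ ≤ N.mulVec ((N ^ k).mulVec u) i := by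
            unfold Matrix.mulVec dotProduct
            exact Finset.sum_le_sum fun j _ => mul_le_mul_of_nonneg_left (ih j) (hN i j)
  -- total mass
  set S := ∑ j, u j with hS
  have hSpos : 0 < S := Finset.sum_pos' (fun j _ => hu j) ⟨i0, Finset.mem_univ i0, hu0⟩
  set c : ℝ := u i0 / (n * S) with hc
  have hnpos : (0:ℝ) < n := by
    have : 0 < n := Fin.pos i0
    exact_mod_cast this
  have hcpos : 0 < c := div_pos hu0 (mul_pos hnpos hSpos)
  -- entry lower bound for each k
  have hentry : ∀ k : ℕ, ∃ j, c ≤ (N ^ k) i0 j := by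
    intro k
    have h1 : u i0 ≤ ∑ j, (N ^ k) i0 j * u j := hpow k i0
    have h2 : ∑ _j : Fin n, (u i0 / n) ≤ ∑ j, (N ^ k) i0 j * u j := by
      rw [Finset.sum_const, Finset.card_univ, Fintype.card_fin, nsmul_eq_mul]
      rw [mul_div_cancel₀]
      · exact h1
      · exact ne_of_gt hnpos
    have hex : ∃ j, u i0 / n ≤ (N ^ k) i0 j * u j := by
      by_contra hcon
      push_neg at hcon
      have := Finset.sum_lt_sum_of_nonempty
        (Finset.univ_nonempty (α := Fin n)) (fun j _ => hcon j)
      exact absurd h2 (not_le.mpr this)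
    obtain ⟨j, hj⟩ := hex
    refine ⟨j, ?_⟩
    have huj : 0 < u j := by
      by_contra h
      push_neg at h
      have : u j = 0 := le_antisymm h (hu j)
      rw [this, mul_zero] at hj
      exact absurd hj (not_le.mpr (div_pos hu0 hnpos))
    have hujS : u j ≤ S := Finset.single_le_sum (fun j _ => hu j) (Finset.mem_univ j)
    have : u i0 / n ≤ (N ^ k) i0 j * S :=
      le_trans hj (mul_le_mul_of_nonneg_left hujS (hNk k i0 j))
    rw [hc, div_le_iff₀ (mul_pos hnpos hSpos)]
    rw [div_le_iff₀ hnpos] at this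
    nlinarith [hNk k i0 j]
  -- complex matrix
  set M : Matrix (Fin n) (Fin n) ℂ := N.map Complex.ofReal with hM
  have hMk : ∀ k : ℕ, M ^ k = (N ^ k).map Complex.ofReal := by
    intro k
    have := map_pow (Complex.ofRealHom.mapMatrix (m := Fin n)) N k
    simp only [RingHom.mapMatrix_apply] at this
    exact this.symm
  -- norm lower bound
  have hnorm : ∀ k : ℕ, c ≤ ‖M ^ k‖ := by
    intro k
    obtain ⟨j, hj⟩ := hentry k
    calc c ≤ (N ^ k) i0 j := hj
      _ = ‖(M ^ k) i0 j‖ := by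
          rw [hMk k]
          simp [Matrix.map_apply,
            abs_of_nonneg (hNk k i0 j)]
      _ ≤ ‖M ^ k‖ := frob_entry_le _ i0 j
  -- Gelfand
  have hgel := spectrum.pow_norm_pow_one_div_tendsto_nhds_spectralRadius M
  have hlow : ∀ᶠ k : ℕ in Filter.atTop, ENNReal.ofReal (c ^ ((1:ℝ)/k)) ≤
      ENNReal.ofReal (‖M ^ k‖ ^ ((1:ℝ)/k)) := by
    filter_upwards [Filter.eventually_ge_atTop 1] with k hk
    apply ENNReal.ofReal_le_ofReal
    apply Real.rpow_le_rpow (le_of_lt hcpos) (hnorm k)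
    positivity
  have htend : Filter.Tendsto (fun k : ℕ => ENNReal.ofReal (c ^ ((1:ℝ)/k)))
      Filter.atTop (nhds 1) := by
    have h1 : Filter.Tendsto (fun k : ℕ => ((1:ℝ)/k)) Filter.atTop (nhds 0) :=
      tendsto_one_div_atTop_nhds_zero_nat
    have h2 : Filter.Tendsto (fun k : ℕ => c ^ ((1:ℝ)/k)) Filter.atTop (nhds 1) := by
      have := Filter.Tendsto.rpow (tendsto_const_nhds (x := c)) h1 (Or.inl (ne_of_gt hcpos))
      simpa using this
    have := (ENNReal.continuous_ofReal.tendsto 1).comp h2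
    simpa [Function.comp_def] using this
  have hge : (1 : ENNReal) ≤ spectralRadius ℂ M :=
    le_of_tendsto_of_tendsto htend hgel hlow
  -- upper bound
  have hlt : spectralRadius ℂ M < 1 := by
    have := spectrum.spectralRadius_lt_of_forall_lt (a := M) (r := 1) ?_
    · simpa using this
    · intro z hz
      have := hs z hz
      rw [← NNReal.coe_lt_coe]
      simpa [coe_nnnorm] using this
  exact absurd hge (not_le.mpr hlt)

/-- Under NI, `lamStar` is below any solution of the overflow equation. -/
lemma lamStar_le_sol {n : ℕ} (α μ lamStar : Fin n → ℝ) (P Q : Matrix (Fin n) (Fin n) ℝ)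
    (hα : ∀ i, 0 ≤ α i) (hμ : ∀ i, 0 < μ i)
    (hP : ∀ i j, 0 ≤ P i j) (hPsub : ∀ i, ∑ j, P i j ≤ 1)
    (hQ : ∀ i j, 0 ≤ Q i j) (hQsub : ∀ i, ∑ j, Q i j ≤ 1)
    (hNI : NI α P)
    (hstar_nonneg : ∀ i, 0 ≤ lamStar i)
    (hstar : ∀ i, lamStar i = α i + ∑ j, min (lamStar j) (μ j) * P j i)
    (x : Fin n → ℝ)
    (hxeq : ∀ i, x i = α i + ∑ j, min (x j) (μ j) * P j i
      + ∑ j, max (x j - μ j) 0 * Q j i) :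
    ∀ i, lamStar i ≤ x i := by
  by_contra hcon
  push_neg at hcon
  obtain ⟨i1, hi1⟩ := hcon
  set w : Fin n → ℝ := fun i => max (lamStar i - x i) 0 with hw
  have hwnn : ∀ i, 0 ≤ w i := fun i => le_max_right _ _
  set D : Fin n → ℝ := fun j => min (lamStar j) (μ j) - min (x j) (μ j) with hD
  have hDle : ∀ j, D j ≤ w j := by
    intro j
    simp only [hD, hw, min_def, max_def]
    split_ifs <;> linarith
  -- equation for the difference
  have hEi : ∀ i, lamStar i - x i
      = (∑ j, D j * P j i) - ∑ j, max (x j - μ j) 0 * Q j i := by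
    intro i
    rw [hstar i, hxeq i]
    simp only [hD, sub_mul, Finset.sum_sub_distrib]
    ring
  have hQt : ∀ i, 0 ≤ ∑ j, max (x j - μ j) 0 * Q j i := fun i =>
    Finset.sum_nonneg fun j _ => mul_nonneg (le_max_right _ _) (hQ j i)
  have hle : ∀ i, w i + (0:ℝ) ≤ (∑ j, w j * P j i) + (∑ j, (0:ℝ) * Q j i) := by
    intro i
    have h1 : ∑ j, D j * P j i ≤ ∑ j, w j * P j i :=
      Finset.sum_le_sum fun j _ => mul_le_mul_of_nonneg_right (hDle j) (hP j i)
    have h2 : (0:ℝ) ≤ ∑ j, w j * P j i :=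
      Finset.sum_nonneg fun j _ => mul_nonneg (hwnn j) (hP j i)
    have h3 := hEi i
    have h4 := hQt i
    simp only [zero_mul, Finset.sum_const_zero, add_zero]
    rcases le_total (lamStar i - x i) 0 with h | h
    · rw [hw]; simp only [max_eq_right h]; exact h2
    · rw [hw]; simp only [max_eq_left h]; linarith
  obtain ⟨heq0, hrow, -⟩ := sum_trick P Q hP hPsub hQ hQsub w (fun _ => 0) hwnn
    (fun _ => le_refl 0) hle
  have heq : ∀ i, w i = ∑ j, w j * P j i := by
    intro i
    have := heq0 i
    simpa using this
  -- closure of the positive set under incoming edges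
  have hclosed : ∀ i, w i = 0 → ∀ j, 0 < w j → P j i = 0 := by
    intro i hi j hj
    have h0 : ∑ j, w j * P j i = 0 := by rw [← heq i, hi]
    have := (Finset.sum_eq_zero_iff_of_nonneg
      (fun j _ => mul_nonneg (hwnn j) (hP j i))).mp h0 j (Finset.mem_univ j)
    rcases mul_eq_zero.mp this with h | h
    · exact absurd h (ne_of_gt hj)
    · exact h
  have hclosed' : ∀ j, 0 < w j → ∀ i, 0 < P j i → 0 < w i := by
    intro j hj i hPji
    rcases (hwnn i).lt_or_eq with h | h
    · exact h
    · exact absurd (hclosed i h.symm j hj) (ne_of_gt hPji)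
  -- w positive where lamStar exceeds x, and equals the difference there
  have hwpos_eq : ∀ i, 0 < w i → w i = lamStar i - x i := by
    intro i hi
    rcases le_total (lamStar i - x i) 0 with h | h
    · exfalso; rw [hw] at hi; simp only [max_eq_right h] at hi; exact lt_irrefl 0 hi
    · rw [hw]; simp only [max_eq_left h]
  -- (E3): D j = w j whenever j routes into the positive set
  have hDeq : ∀ i, 0 < w i → ∀ j, 0 < P j i → D j = w j := by
    intro i hi j hPji
    have hkey : ∑ j, (w j - D j) * P j i ≤ 0 := by
      have h3 := hEi i
      have h4 := hQt i
      have h5 := hwpos_eq i hi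
      have h6 := heq i
      have : ∑ j, (w j - D j) * P j i = (∑ j, w j * P j i) - ∑ j, D j * P j i := by
        simp only [sub_mul, Finset.sum_sub_distrib]
      rw [this]
      linarith
    have hkey2 : ∑ j, (w j - D j) * P j i = 0 :=
      le_antisymm hkey (Finset.sum_nonneg fun j _ =>
        mul_nonneg (by linarith [hDle j]) (hP j i))
    have := (Finset.sum_eq_zero_iff_of_nonneg
      (fun j _ => mul_nonneg (by linarith [hDle j]) (hP j i))).mp hkey2 j (Finset.mem_univ j)
    rcases mul_eq_zero.mp this with h | h
    · linarith
    · exact absurd h (ne_of_gt hPji)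
  -- (E5)
  have hmubound : ∀ j, 0 < w j → D j = w j → lamStar j ≤ μ j := by
    intro j hj hDj
    have h5 := hwpos_eq j hj
    by_contra hcon2
    push_neg at hcon2
    rw [h5] at hDj
    simp only [hD, min_def] at hDj
    split_ifs at hDj <;> linarith
  -- reachability
  set reach : Fin n → Fin n → Prop := fun a b => a = b ∨ ∃ k ≥ 1, 0 < (P ^ k) a b with hreach
  have hreach_refl : ∀ a, reach a a := fun a => Or.inl rfl
  have hreach_trans : ∀ a b c, reach a b → reach b c → reach a c := by
    rintro a b c (rfl | ⟨k, hk, hkp⟩) h2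
    · exact h2
    · rcases h2 with rfl | ⟨l, hl, hlp⟩
      · exact Or.inr ⟨k, hk, hkp⟩
      · exact Or.inr ⟨k + l, by omega, pow_pos_trans P hP hkp hlp⟩
  have hstep_closed : ∀ (k : ℕ) (a b : Fin n), 0 < w a → 0 < (P ^ (k+1)) a b → 0 < w b := by
    intro k
    induction k with
    | zero =>
      intro a b ha hab
      rw [pow_one] at hab
      exact hclosed' a ha b hab
    | succ k ih =>
      intro a b ha hab
      obtain ⟨c, hc1, hc2⟩ := pow_succ_pos_decomp P hP hab
      exact hclosed' c (ih a c ha hc1) b hc2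
  have hreach_closed : ∀ a b, 0 < w a → reach a b → 0 < w b := by
    rintro a b ha (rfl | ⟨k, hk, hkp⟩)
    · exact ha
    · obtain ⟨k', rfl⟩ : ∃ k', k = k' + 1 := ⟨k - 1, by omega⟩
      exact hstep_closed k' a b ha hkp
  have hcomm_iff : ∀ a b, Communicates P a b ↔ (reach a b ∧ reach b a) := by
    intro a b
    constructor
    · rintro (rfl | ⟨h1, h2⟩)
      · exact ⟨hreach_refl a, hreach_refl a⟩
      · exact ⟨Or.inr h1, Or.inr h2⟩
    · rintro ⟨h1, h2⟩
      rcases h1 with h1 | h1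
      · exact Or.inl h1
      · rcases h2 with h2 | h2
        · exact Or.inl h2.symm
        · exact Or.inr ⟨h1, h2⟩
  -- pick a minimal class inside the positive set
  set g : Fin n → ℕ := fun a => (Finset.univ.filter (fun b => reach a b)).card with hg
  set Fset : Finset (Fin n) := Finset.univ.filter (fun i => 0 < w i) with hFset
  have hFne : Fset.Nonempty := by
    refine ⟨i1, ?_⟩
    rw [hFset, Finset.mem_filter]
    refine ⟨Finset.mem_univ i1, ?_⟩
    rw [hw]
    simp only [lt_max_iff]
    left; linarith
  obtain ⟨istar, histar, hmin⟩ := Finset.exists_min_image Fset g hFne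
  have histar' : 0 < w istar := by
    rw [hFset, Finset.mem_filter] at histar; exact histar.2
  set C : Set (Fin n) := {j | Communicates P istar j} with hC
  have hCclass : IsCommClass P C := ⟨istar, rfl⟩
  have hCreach : ∀ j ∈ C, reach istar j := fun j hj => ((hcomm_iff istar j).mp hj).1
  have hCF : ∀ j ∈ C, 0 < w j := fun j hj => hreach_closed istar j histar' (hCreach j hj)
  have hrowC : ∀ i ∈ C, ∑ j', P i j' = 1 := fun i hi => hrow i (hCF i hi)
  have hnoexit : ∀ i ∈ C, ∀ j, 0 < P i j → j ∈ C := by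
    intro i hiC j hPij
    by_contra hjC
    have hri : reach istar i := hCreach i hiC
    have hrj : reach istar j :=
      hreach_trans istar i j hri (Or.inr ⟨1, le_refl 1, by rwa [pow_one]⟩)
    have hwj : 0 < w j := hreach_closed istar j histar' hrj
    have hnotback : ¬ reach j istar := fun hback =>
      hjC ((hcomm_iff istar j).mpr ⟨hrj, hback⟩)
    have hsub : (Finset.univ.filter (fun b => reach j b)) ⊆
        (Finset.univ.filter (fun b => reach istar b)) := by
      intro b hb
      rw [Finset.mem_filter] at hb ⊢
      exact ⟨Finset.mem_univ b, hreach_trans istar j b hrj hb.2⟩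
    have hstrict : (Finset.univ.filter (fun b => reach j b)) ⊂
        (Finset.univ.filter (fun b => reach istar b)) := by
      refine (Finset.ssubset_iff_of_subset hsub).mpr ⟨istar, ?_, ?_⟩
      · rw [Finset.mem_filter]; exact ⟨Finset.mem_univ istar, hreach_refl istar⟩
      · rw [Finset.mem_filter]; push_neg; intro _; exact hnotback
    have hglt : g j < g istar := Finset.card_lt_card hstrict
    have hjF : j ∈ Fset := by
      rw [hFset, Finset.mem_filter]; exact ⟨Finset.mem_univ j, hwj⟩
    exact absurd (hmin j hjF) (not_le.mpr hglt)
  have hdrain : ¬ CanBeDrained P C := by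
    rintro (⟨i, hiC, hlt⟩ | ⟨i, hiC, j, hjC, hPij⟩)
    · exact absurd (hrowC i hiC) (ne_of_lt hlt)
    · exact hjC (hnoexit i hiC j hPij)
  have hfilled : CanBeFilled α P C := (hNI C hCclass).resolve_right hdrain
  -- lamStar ≤ μ on C
  have hClam : ∀ j ∈ C, lamStar j ≤ μ j := by
    intro j hj
    have hwj := hCF j hj
    have hrowj := hrowC j hj
    have hex : ∃ i, 0 < P j i := by
      by_contra hcon2
      push_neg at hcon2
      have : ∑ i, P j i = 0 := Finset.sum_eq_zero fun i _ =>
        le_antisymm (hcon2 i) (hP j i)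
      rw [this] at hrowj; norm_num at hrowj
    obtain ⟨i, hPji⟩ := hex
    have hiC : i ∈ C := hnoexit j hj i hPji
    exact hmubound j hwj (hDeq i (hCF i hiC) j hPji)
  set Cs : Finset (Fin n) := Finset.univ.filter (· ∈ C) with hCs
  have hmemCs : ∀ i, i ∈ Cs ↔ i ∈ C := by
    intro i; rw [hCs, Finset.mem_filter]; simp
  -- flow conservation on C
  have hPC0 : ∀ j ∈ C, ∀ i, i ∉ C → P j i = 0 := by
    intro j hj i hi
    by_contra hcon2
    have : 0 < P j i := (hP j i).lt_of_ne (Ne.symm hcon2)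
    exact hi (hnoexit j hj i this)
  have hrowCs : ∀ j ∈ Cs, ∑ i ∈ Cs, P j i = 1 := by
    intro j hj
    rw [(hmemCs j)] at hj
    rw [Finset.sum_subset (Finset.subset_univ Cs)
      (fun i _ hi => hPC0 j hj i (by rwa [← hmemCs i, ]  ))]
    · exact hrowC j hj
  have hconserv : ∑ i ∈ Cs, lamStar i = ∑ i ∈ Cs, α i
      + ∑ j, min (lamStar j) (μ j) * (∑ i ∈ Cs, P j i) := by
    calc ∑ i ∈ Cs, lamStar i = ∑ i ∈ Cs, (α i + ∑ j, min (lamStar j) (μ j) * P j i) := by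
          exact Finset.sum_congr rfl fun i _ => hstar i
      _ = ∑ i ∈ Cs, α i + ∑ i ∈ Cs, ∑ j, min (lamStar j) (μ j) * P j i :=
          Finset.sum_add_distrib
      _ = ∑ i ∈ Cs, α i + ∑ j, min (lamStar j) (μ j) * (∑ i ∈ Cs, P j i) := by
          rw [Finset.sum_comm]
          simp only [Finset.mul_sum]
  have hsplit2 : ∑ j, min (lamStar j) (μ j) * (∑ i ∈ Cs, P j i)
      = ∑ j ∈ Cs, min (lamStar j) (μ j) * (∑ i ∈ Cs, P j i)
        + ∑ j ∈ Csᶜ, min (lamStar j) (μ j) * (∑ i ∈ Cs, P j i) := by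
    rw [← Finset.sum_add_sum_compl Cs]
  have hinC : ∑ j ∈ Cs, min (lamStar j) (μ j) * (∑ i ∈ Cs, P j i) = ∑ j ∈ Cs, lamStar j := by
    refine Finset.sum_congr rfl fun j hj => ?_
    rw [hrowCs j hj, mul_one, min_eq_left (hClam j ((hmemCs j).mp hj))]
  have hzero2 : ∑ i ∈ Cs, α i + ∑ j ∈ Csᶜ, min (lamStar j) (μ j) * (∑ i ∈ Cs, P j i) = 0 := by
    have := hconserv
    rw [hsplit2, hinC] at this
    linarith
  have halphaC : ∀ i ∈ C, α i = 0 := by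
    have h1 : (0:ℝ) ≤ ∑ i ∈ Cs, α i := Finset.sum_nonneg fun i _ => hα i
    have h2 : (0:ℝ) ≤ ∑ j ∈ Csᶜ, min (lamStar j) (μ j) * (∑ i ∈ Cs, P j i) :=
      Finset.sum_nonneg fun j _ => mul_nonneg (le_min (hstar_nonneg j) (le_of_lt (hμ j)))
        (Finset.sum_nonneg fun i _ => hP j i)
    have hαsum : ∑ i ∈ Cs, α i = 0 := by linarith
    intro i hi
    exact (Finset.sum_eq_zero_iff_of_nonneg (fun i _ => hα i)).mp hαsum i ((hmemCs i).mpr hi)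
  have hout : ∀ j, j ∉ C → ∀ i ∈ C, 0 < P j i → lamStar j = 0 := by
    have h1 : (0:ℝ) ≤ ∑ i ∈ Cs, α i := Finset.sum_nonneg fun i _ => hα i
    have h2 : (0:ℝ) ≤ ∑ j ∈ Csᶜ, min (lamStar j) (μ j) * (∑ i ∈ Cs, P j i) :=
      Finset.sum_nonneg fun j _ => mul_nonneg (le_min (hstar_nonneg j) (le_of_lt (hμ j)))
        (Finset.sum_nonneg fun i _ => hP j i)
    have hsum0 : ∑ j ∈ Csᶜ, min (lamStar j) (μ j) * (∑ i ∈ Cs, P j i) = 0 := by linarith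
    intro j hj i hi hPji
    have hjCs : j ∈ Csᶜ := by
      rw [Finset.mem_compl]
      intro hmem
      exact hj ((hmemCs j).mp hmem)
    have hterm := (Finset.sum_eq_zero_iff_of_nonneg (fun j _ =>
      mul_nonneg (le_min (hstar_nonneg j) (le_of_lt (hμ j)))
        (Finset.sum_nonneg fun i _ => hP j i))).mp hsum0 j hjCs
    have hsumpos : 0 < ∑ i ∈ Cs, P j i := by
      calc (0:ℝ) < P j i := hPji
        _ ≤ ∑ i ∈ Cs, P j i :=
          Finset.single_le_sum (fun i _ => hP j i) ((hmemCs i).mpr hi)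
    rcases mul_eq_zero.mp hterm with h | h
    · rcases le_total (lamStar j) (μ j) with hm | hm
      · rwa [min_eq_left hm] at h
      · rw [min_eq_right hm] at h
        exfalso; linarith [hμ j]
    · exact absurd h (ne_of_gt hsumpos)
  -- positivity propagation
  have hlampos : ∀ (k : ℕ) (a b : Fin n), 0 < (P ^ k) a b → 0 < lamStar a → 0 < lamStar b := by
    intro k
    induction k with
    | zero =>
      intro a b hab ha
      rw [pow_zero, Matrix.one_apply] at hab
      split_ifs at hab with h
      · exact h ▸ ha
      · exact absurd hab (lt_irrefl 0)
    | succ k ih =>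
      intro a b hab ha
      obtain ⟨c, hc1, hc2⟩ := pow_succ_pos_decomp P hP hab
      have hc : 0 < lamStar c := ih a c hc1 ha
      have : 0 < min (lamStar c) (μ c) * P c b :=
        mul_pos (lt_min hc (hμ c)) hc2
      have hsum : min (lamStar c) (μ c) * P c b ≤ ∑ j, min (lamStar j) (μ j) * P j b :=
        Finset.single_le_sum (fun j _ => mul_nonneg
          (le_min (hstar_nonneg j) (le_of_lt (hμ j))) (hP j b)) (Finset.mem_univ c)
      rw [hstar b]
      linarith [hα b]
  -- contradiction from filled
  rcases hfilled with ⟨i, hiC, hαi⟩ | ⟨j0, hαj0, l, hlC, k, hk1, hkpos⟩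
  · exact absurd (halphaC i hiC) (ne_of_gt hαi)
  · have hlamj0 : 0 < lamStar j0 := by
      rw [hstar j0]
      have : (0:ℝ) ≤ ∑ j, min (lamStar j) (μ j) * P j j0 :=
        Finset.sum_nonneg fun j _ => mul_nonneg
          (le_min (hstar_nonneg j) (le_of_lt (hμ j))) (hP j j0)
      linarith
    by_cases hj0C : j0 ∈ C
    · exact absurd (halphaC j0 hj0C) (ne_of_gt hαj0)
    · have hentryC : ∀ (k : ℕ), 1 ≤ k → ∀ j l, j ∉ C → l ∈ C → 0 < (P ^ k) j l →
          0 < lamStar j → False := by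
        intro k
        induction k with
        | zero => omega
        | succ k ih =>
          intro _ j l hjC hlC hpos hlamj
          by_cases hk0 : k = 0
          · subst hk0
            rw [pow_one] at hpos
            exact absurd (hout j hjC l hlC hpos) (ne_of_gt hlamj)
          · obtain ⟨c, hc1, hc2⟩ := pow_succ_pos_decomp P hP hpos
            by_cases hcC : c ∈ C
            · exact ih (Nat.one_le_iff_ne_zero.mpr hk0) j c hjC hcC hc1 hlamj
            · exact absurd (hout c hcC l hlC hc2)
                (ne_of_gt (hlampos k j c hc1 hlamj))
      exact hentryC k hk1 j0 l hj0C hlC hkpos hlamj0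


end OverflowAux

/-- uniqueness for the overflow traffic equation under the
spectral-radius condition. -/
theorem overflow_equation_unique_solution (n : ℕ)
    (α μ lamStar : Fin n → ℝ) (P Q : Matrix (Fin n) (Fin n) ℝ)
    (hα : ∀ i, 0 ≤ α i) (hμ : ∀ i, 0 < μ i)
    (hP : ∀ i j, 0 ≤ P i j) (hPsub : ∀ i, ∑ j, P i j ≤ 1)
    (hQ : ∀ i j, 0 ≤ Q i j) (hQsub : ∀ i, ∑ j, Q i j ≤ 1)
    (hNI : NI α P)
    (hstar_nonneg : ∀ i, 0 ≤ lamStar i)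
    (hstar : ∀ i, lamStar i = α i + ∑ j, min (lamStar j) (μ j) * P j i)
    (hspec : ∀ A : Set (Fin n), A ⊆ {i | lamStar i < μ i} →
      SpecLtOne (rowRestrict P A + rowRestrict Q Aᶜ))
    (x y : Fin n → ℝ)
    (hxeq : ∀ i, x i = α i + ∑ j, min (x j) (μ j) * P j i
      + ∑ j, max (x j - μ j) 0 * Q j i)
    (hyeq : ∀ i, y i = α i + ∑ j, min (y j) (μ j) * P j i
      + ∑ j, max (y j - μ j) 0 * Q j i) :
    x = y := by
  classical
  by_contra hxy
  obtain ⟨i1, hi1⟩ := Function.ne_iff.mp hxy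
  have hlx := OverflowAux.lamStar_le_sol α μ lamStar P Q hα hμ hP hPsub hQ hQsub hNI
    hstar_nonneg hstar x hxeq
  have hly := OverflowAux.lamStar_le_sol α μ lamStar P Q hα hμ hP hPsub hQ hQsub hNI
    hstar_nonneg hstar y hyeq
  set a : Fin n → ℝ := fun j => min (x j) (μ j) - min (y j) (μ j) with ha
  set b : Fin n → ℝ := fun j => max (x j - μ j) 0 - max (y j - μ j) 0 with hb
  have hab : ∀ j, a j + b j = x j - y j := by
    intro j
    have h1 := OverflowAux.min_max_split (x j) (μ j)
    have h2 := OverflowAux.min_max_split (y j) (μ j)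
    simp only [ha, hb]
    linarith
  have habs : ∀ j, |a j| + |b j| = |x j - y j| := by
    intro j
    rcases le_total (y j) (x j) with h | h
    · have h1 : 0 ≤ a j := by
        have := min_le_min h (le_refl (μ j))
        simp only [ha]; linarith
      have h2 : 0 ≤ b j := by
        have := max_le_max (by linarith : y j - μ j ≤ x j - μ j) (le_refl (0:ℝ))
        simp only [hb]; linarith
      rw [abs_of_nonneg h1, abs_of_nonneg h2, abs_of_nonneg (by linarith : (0:ℝ) ≤ x j - y j),
        hab j]
    · have h1 : a j ≤ 0 := by
        have := min_le_min h (le_refl (μ j))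
        simp only [ha]; linarith
      have h2 : b j ≤ 0 := by
        have := max_le_max (by linarith : x j - μ j ≤ y j - μ j) (le_refl (0:ℝ))
        simp only [hb]; linarith
      rw [abs_of_nonpos h1, abs_of_nonpos h2, abs_of_nonpos (by linarith : x j - y j ≤ 0)]
      have := hab j
      linarith
  have hdiff : ∀ i, x i - y i = (∑ j, a j * P j i) + ∑ j, b j * Q j i := by
    intro i
    rw [hxeq i, hyeq i]
    simp only [ha, hb, sub_mul, Finset.sum_sub_distrib]
    ring
  have hle : ∀ i, |a i| + |b i| ≤ (∑ j, |a j| * P j i) + ∑ j, |b j| * Q j i := by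
    intro i
    rw [habs i]
    calc |x i - y i| = |(∑ j, a j * P j i) + ∑ j, b j * Q j i| := by rw [hdiff i]
      _ ≤ |∑ j, a j * P j i| + |∑ j, b j * Q j i| := abs_add_le _ _
      _ ≤ (∑ j, |a j * P j i|) + ∑ j, |b j * Q j i| :=
          add_le_add (Finset.abs_sum_le_sum_abs _ _) (Finset.abs_sum_le_sum_abs _ _)
      _ = (∑ j, |a j| * P j i) + ∑ j, |b j| * Q j i := by
          congr 1 <;> refine Finset.sum_congr rfl fun j _ => ?_
          · rw [abs_mul, abs_of_nonneg (hP j i)]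
          · rw [abs_mul, abs_of_nonneg (hQ j i)]
  obtain ⟨heqm, hrowP, hrowQ⟩ := OverflowAux.sum_trick P Q hP hPsub hQ hQsub
    (fun j => |a j|) (fun j => |b j|) (fun j => abs_nonneg _) (fun j => abs_nonneg _) hle
  have hzero : ∀ i, x i = y i →
      (∀ j, |a j| * P j i = 0) ∧ (∀ j, |b j| * Q j i = 0) := by
    intro i hi
    have h0 : (∑ j, |a j| * P j i) + (∑ j, |b j| * Q j i) = 0 := by
      have := heqm i
      have h1 : |a i| + |b i| = 0 := by
        rw [habs i, hi]
        simp
      linarith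
    have hPn : (0:ℝ) ≤ ∑ j, |a j| * P j i :=
      Finset.sum_nonneg fun j _ => mul_nonneg (abs_nonneg _) (hP j i)
    have hQn : (0:ℝ) ≤ ∑ j, |b j| * Q j i :=
      Finset.sum_nonneg fun j _ => mul_nonneg (abs_nonneg _) (hQ j i)
    have hP0 : ∑ j, |a j| * P j i = 0 := by linarith
    have hQ0 : ∑ j, |b j| * Q j i = 0 := by linarith
    constructor
    · intro j
      exact (Finset.sum_eq_zero_iff_of_nonneg
        (fun j _ => mul_nonneg (abs_nonneg _) (hP j i))).mp hP0 j (Finset.mem_univ j)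
    · intro j
      exact (Finset.sum_eq_zero_iff_of_nonneg
        (fun j _ => mul_nonneg (abs_nonneg _) (hQ j i))).mp hQ0 j (Finset.mem_univ j)
  set A : Set (Fin n) := {j | a j ≠ 0} with hA
  have hAsub : A ⊆ {i | lamStar i < μ i} := by
    intro j hj
    simp only [hA, Set.mem_setOf_eq] at hj
    simp only [Set.mem_setOf_eq]
    by_contra hcon
    push_neg at hcon
    have hxj : μ j ≤ x j := le_trans hcon (hlx j)
    have hyj : μ j ≤ y j := le_trans hcon (hly j)
    apply hj
    simp only [ha, min_eq_right hxj, min_eq_right hyj, sub_self]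
  have hspecA := hspec A hAsub
  set N : Matrix (Fin n) (Fin n) ℝ := rowRestrict P A + rowRestrict Q Aᶜ with hN
  have hNnn : ∀ i j, 0 ≤ N i j := by
    intro i j
    simp only [hN, Matrix.add_apply, rowRestrict]
    split_ifs <;> linarith [hP i j, hQ i j]
  set u0 : Fin n → ℝ := fun i => if x i = y i then (0:ℝ) else 1 with hu0
  have hu0nn : ∀ i, 0 ≤ u0 i := by
    intro i; simp only [hu0]; split_ifs <;> norm_num
  have hsubinv : ∀ j, u0 j ≤ N.mulVec u0 j := by
    intro j
    have hmv : N.mulVec u0 j = ∑ i, N j i * u0 i := rfl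
    by_cases hj : x j = y j
    · have : u0 j = 0 := if_pos hj
      rw [this, hmv]
      exact Finset.sum_nonneg fun i _ => mul_nonneg (hNnn j i) (hu0nn i)
    · have hu0j : u0 j = 1 := if_neg hj
      rw [hu0j, hmv]
      by_cases hjA : j ∈ A
      · have hrowN : ∀ i, N j i = P j i := by
          intro i
          simp only [hN, Matrix.add_apply, rowRestrict, Set.mem_compl_iff]
          rw [if_pos hjA, if_neg (by simpa using hjA)]
          ring
        have hsum : ∑ i, N j i * u0 i = ∑ i, P j i := by
          refine Finset.sum_congr rfl fun i _ => ?_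
          rw [hrowN i]
          by_cases hi : x i = y i
          · have hPji : P j i = 0 := by
              have h0 := (hzero i hi).1 j
              rcases mul_eq_zero.mp h0 with h | h
              · exact absurd (abs_eq_zero.mp h) hjA
              · exact h
            simp [hu0, hi, hPji]
          · simp [hu0, hi]
        rw [hsum, hrowP j (abs_pos.mpr hjA)]
      · have haj : a j = 0 := by simpa [hA] using hjA
        have hbj : b j ≠ 0 := by
          intro h0
          apply hj
          have := hab j
          rw [haj, h0] at this
          linarith
        have hrowN : ∀ i, N j i = Q j i := by
          intro i
          simp only [hN, Matrix.add_apply, rowRestrict, Set.mem_compl_iff]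
          rw [if_neg hjA, if_pos (by simpa using hjA)]
          ring
        have hsum : ∑ i, N j i * u0 i = ∑ i, Q j i := by
          refine Finset.sum_congr rfl fun i _ => ?_
          rw [hrowN i]
          by_cases hi : x i = y i
          · have hQji : Q j i = 0 := by
              have h0 := (hzero i hi).2 j
              rcases mul_eq_zero.mp h0 with h | h
              · exact absurd (abs_eq_zero.mp h) hbj
              · exact h
            simp [hu0, hi, hQji]
          · simp [hu0, hi]
        rw [hsum, hrowQ j (abs_pos.mpr hbj)]
  have hfin := OverflowAux.specLtOne_no_subinvariant N hNnn hspecA u0 hu0nn hsubinv i1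
  rw [hu0] at hfin
  simp only [if_neg hi1] at hfin
  exact one_ne_zero hfin
end

section
/- Let x be a nonnegative vector, S = {i : x_i < μ_i}, T = N∖S, and suppose x ≥ α + μ_T P_{TN} + x_S P_{SN} with σ(P_{SS}) < 1. Let y be the unique solution of y = α + μ_T P_{TN} + y_S P_{SN}. Then [y]_S ≤ [x]_S entrywise, and consequently {i : y_i < μ_i} ⊇ S. -/
open scoped Classical

/-- `P` with all rows and columns outside `A` zeroed out (the matrix `P_{AA}`). -/
noncomputable def restrict {n : ℕ} (P : Matrix (Fin n) (Fin n) ℝ) (A : Set (Fin n)) :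
    Matrix (Fin n) (Fin n) ℝ :=
  fun i j => if i ∈ A ∧ j ∈ A then P i j else 0

noncomputable def gmIter {n : ℕ} (Q : Matrix (Fin n) (Fin n) ℝ) (u : Fin n → ℝ) :
    ℕ → Fin n → ℝ
  | 0 => u
  | (k + 1) => fun i => ∑ j, gmIter Q u k j * Q j i

/-- If `0 ≤ u ≤ uQ`, `u ≠ 0`, `Q ≥ 0` with row sums `≤ 1`, then there is a nonzero
left fixed vector of `Q`, hence `det (1 - Q) = 0`. -/
lemma gm_fixed {n : ℕ} (Q : Matrix (Fin n) (Fin n) ℝ) (u : Fin n → ℝ)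
    (hQnn : ∀ i j, 0 ≤ Q i j) (hQrow : ∀ i, ∑ j, Q i j ≤ 1)
    (hu0 : ∀ j, 0 ≤ u j) (hu : ∀ i, u i ≤ ∑ j, u j * Q j i)
    (i0 : Fin n) (hi0 : 0 < u i0) :
    ((1 : Matrix (Fin n) (Fin n) ℝ) - Q).det = 0 := by
  classical
  set f := gmIter Q u with hf
  have hnn : ∀ k i, 0 ≤ f k i := by
    intro k
    induction k with
    | zero => exact hu0
    | succ k ih =>
      intro i
      exact Finset.sum_nonneg fun j _ => mul_nonneg (ih j) (hQnn j i)
  have hmono : ∀ k i, f k i ≤ f (k + 1) i := by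
    intro k
    induction k with
    | zero => exact hu
    | succ k ih =>
      intro i
      exact Finset.sum_le_sum fun j _ => mul_le_mul_of_nonneg_right (ih j) (hQnn j i)
  have hsum : ∀ k, ∑ i, f k i ≤ ∑ i, u i := by
    intro k
    induction k with
    | zero => exact le_rfl
    | succ k ih =>
      calc ∑ i, f (k + 1) i = ∑ i, ∑ j, f k j * Q j i := rfl
        _ = ∑ j, f k j * ∑ i, Q j i := by
            rw [Finset.sum_comm]; simp [Finset.mul_sum]
        _ ≤ ∑ j, f k j := by
            refine Finset.sum_le_sum fun j _ => ?_
            calc f k j * ∑ i, Q j i ≤ f k j * 1 :=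
                  mul_le_mul_of_nonneg_left (hQrow j) (hnn k j)
              _ = f k j := mul_one _
        _ ≤ ∑ i, u i := ih
  have hbd : ∀ k i, f k i ≤ ∑ i, u i := by
    intro k i
    calc f k i ≤ ∑ i, f k i :=
          Finset.single_le_sum (fun j _ => hnn k j) (Finset.mem_univ i)
      _ ≤ ∑ i, u i := hsum k
  have hmono' : ∀ i, Monotone fun k => f k i := by
    intro i
    exact monotone_nat_of_le_succ fun k => hmono k i
  have hbdd : ∀ i, BddAbove (Set.range fun k => f k i) := by
    intro i
    exact ⟨∑ i, u i, by rintro _ ⟨k, rfl⟩; exact hbd k i⟩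
  set w : Fin n → ℝ := fun i => ⨆ k, f k i with hw
  have hlim : ∀ i, Filter.Tendsto (fun k => f k i) Filter.atTop (nhds (w i)) := by
    intro i
    exact tendsto_atTop_ciSup (hmono' i) (hbdd i)
  have hwfix : ∀ i, w i = ∑ j, w j * Q j i := by
    intro i
    have h1 : Filter.Tendsto (fun k => f (k + 1) i) Filter.atTop (nhds (w i)) :=
      (hlim i).comp (Filter.tendsto_add_atTop_nat 1)
    have h2 : Filter.Tendsto (fun k => f (k + 1) i) Filter.atTop
        (nhds (∑ j, w j * Q j i)) := by
      have : (fun k => f (k + 1) i) = fun k => ∑ j, f k j * Q j i := rfl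
      rw [this]
      exact tendsto_finset_sum _ fun j _ => (hlim j).mul_const _
    exact tendsto_nhds_unique h1 h2
  have hwu : ∀ i, u i ≤ w i := fun i => le_ciSup (hbdd i) 0
  have hwne : w ≠ 0 := by
    intro h
    have := hwu i0
    rw [h] at this
    exact absurd (lt_of_lt_of_le hi0 this) (by simp)
  rw [← Matrix.exists_vecMul_eq_zero_iff]
  refine ⟨w, hwne, ?_⟩
  funext i
  rw [Matrix.vecMul_sub, Matrix.vecMul_one]
  simp only [Pi.sub_apply, Pi.zero_apply]
  rw [show (Matrix.vecMul w Q) i = ∑ j, w j * Q j i from rfl, ← hwfix i]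
  ring

/-- the Goodman–Massey iteration is monotone: the solution `y`
of the linearized equation is dominated on `S` by any supersolution `x`, and
the stable set grows. -/
theorem goodman_massey_iteration_monotone (n : ℕ)
    (α μ x y : Fin n → ℝ) (P : Matrix (Fin n) (Fin n) ℝ)
    (hα : ∀ i, 0 ≤ α i) (hμ : ∀ i, 0 < μ i)
    (hP : ∀ i j, 0 ≤ P i j) (hPsub : ∀ i, ∑ j, P i j ≤ 1)
    (hx : ∀ i, 0 ≤ x i)
    (S : Set (Fin n)) (hS : S = {i | x i < μ i})
    (hxge : ∀ i, x i ≥ α i + ∑ j, (if j ∈ S then x j else μ j) * P j i)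
    (hspec : SpecLtOne (restrict P S))
    (hyeq : ∀ i, y i = α i + ∑ j, (if j ∈ S then y j else μ j) * P j i) :
    (∀ i ∈ S, y i ≤ x i) ∧ S ⊆ {i | y i < μ i} := by
  classical
  set Q : Matrix (Fin n) (Fin n) ℝ := restrict P S with hQdef
  have hQnn : ∀ i j, 0 ≤ Q i j := by
    intro i j
    simp only [hQdef, restrict]
    split
    · exact hP i j
    · exact le_rfl
  have hQle : ∀ i j, Q i j ≤ P i j := by
    intro i j
    simp only [hQdef, restrict]
    split
    · exact le_rfl
    · exact hP i j
  have hQrow : ∀ i, ∑ j, Q i j ≤ 1 :=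
    fun i => le_trans (Finset.sum_le_sum fun j _ => hQle i j) (hPsub i)
  set v : Fin n → ℝ := fun j => if j ∈ S then x j - y j else 0 with hvdef
  -- supersolution inequality for v
  have hvP : ∀ i, ∑ j, v j * P j i ≤ v i ∨ i ∉ S := by
    intro i
    by_cases hiS : i ∈ S
    · left
      have h1 := hxge i
      have h2 := hyeq i
      have : ∑ j, v j * P j i
          = (∑ j, (if j ∈ S then x j else μ j) * P j i)
            - ∑ j, (if j ∈ S then y j else μ j) * P j i := by
        rw [← Finset.sum_sub_distrib]
        refine Finset.sum_congr rfl fun j _ => ?_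
        by_cases hjS : j ∈ S <;> simp [hvdef, hjS] <;> ring
      rw [this]
      simp only [hvdef, if_pos hiS]
      linarith
    · right; exact hiS
  have hvQ : ∀ i, ∑ j, v j * Q j i ≤ v i := by
    intro i
    by_cases hiS : i ∈ S
    · have heq : ∀ j, v j * Q j i = v j * P j i := by
        intro j
        by_cases hjS : j ∈ S
        · simp [hQdef, restrict, hjS, hiS]
        · simp [hvdef, hjS]
      rw [Finset.sum_congr rfl fun j _ => heq j]
      rcases hvP i with h | h
      · exact h
      · exact absurd hiS h
    · have heq : ∀ j, v j * Q j i = 0 := by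
        intro j
        simp [hQdef, restrict, hiS]
      rw [Finset.sum_congr rfl fun j _ => heq j, Finset.sum_const_zero]
      simp [hvdef, hiS]
  -- main claim: v ≥ 0
  have key : ∀ i ∈ S, y i ≤ x i := by
    by_contra hcon
    push_neg at hcon
    obtain ⟨i0, hi0S, hi0⟩ := hcon
    set u : Fin n → ℝ := fun j => max (-(v j)) 0 with hudef
    have hu0 : ∀ j, 0 ≤ u j := fun j => le_max_right _ _
    have hi0u : 0 < u i0 := by
      have : v i0 = x i0 - y i0 := by simp [hvdef, hi0S]
      simp only [hudef, lt_max_iff]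
      left; rw [this]; linarith
    have hu : ∀ i, u i ≤ ∑ j, u j * Q j i := by
      intro i
      have hnn : 0 ≤ ∑ j, u j * Q j i :=
        Finset.sum_nonneg fun j _ => mul_nonneg (hu0 j) (hQnn j i)
      rcases le_or_gt (-(v i)) 0 with h | h
      · calc u i = 0 := max_eq_right h
          _ ≤ _ := hnn
      · have : u i = -(v i) := max_eq_left h.le
        rw [this]
        calc -(v i) ≤ -(∑ j, v j * Q j i) := by linarith [hvQ i]
          _ = ∑ j, -(v j) * Q j i := by
              rw [← Finset.sum_neg_distrib]
              exact Finset.sum_congr rfl fun j _ => by ring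
          _ ≤ ∑ j, u j * Q j i :=
              Finset.sum_le_sum fun j _ =>
                mul_le_mul_of_nonneg_right (le_max_left _ _) (hQnn j i)
    have hdet : ((1 : Matrix (Fin n) (Fin n) ℝ) - Q).det = 0 :=
      gm_fixed Q u hQnn hQrow hu0 hu i0 hi0u
    -- 1 is in the complex spectrum of Q
    have hmem : (1 : ℂ) ∈ spectrum ℂ (Q.map Complex.ofReal) := by
      rw [spectrum.mem_iff]
      intro hunit
      rw [Matrix.isUnit_iff_isUnit_det] at hunit
      have hdetC : (algebraMap ℂ (Matrix (Fin n) (Fin n) ℂ) 1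
          - Q.map Complex.ofReal).det = 0 := by
        have : algebraMap ℂ (Matrix (Fin n) (Fin n) ℂ) 1 - Q.map Complex.ofReal
            = ((1 : Matrix (Fin n) (Fin n) ℝ) - Q).map Complex.ofReal := by
          rw [map_one]
          funext i j
          by_cases hij : i = j <;>
            simp [Matrix.map_apply, Matrix.one_apply, hij]
        rw [this]
        have h3 : ((1 - Q).map Complex.ofReal).det
            = Complex.ofRealHom ((1 - Q).det) :=
          (RingHom.map_det Complex.ofRealHom _).symm
        rw [h3, hdet, map_zero]
      rw [hdetC] at hunit
      exact (by simpa using hunit : False)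
    have := hspec 1 hmem
    simp at this
  refine ⟨key, ?_⟩
  intro i hiS
  have h1 : x i < μ i := by rw [hS] at hiS; exact hiS
  have h2 : y i ≤ x i := key i hiS
  simp only [Set.mem_setOf_eq]
  linarith
end
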